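/- arXiv:2209.02512 — 2 statements merged into one kernel-verified Lean document; each statement's English description precedes it below -/
import Mathlib

section
/- Let $\mathfrak{u}$ be a finite-dimensional unipotent restricted Lie algebra over an algebraically closed field of characteristic $p \ge 3$ whose nullcone $V(\mathfrak{u}) = \{x \in \mathfrak{u} : x^{[p]} = 0\}$ is irreducible of dimension at least $2$. Then the variety $\mathbb{E}(2,\mathfrak{u})$ of two-dimensional elementary abelian $p$-subalgebras is non-empty and connected. -/
open scoped TensorProduct

attribute [local instance 100] LieRing.ofAssociativeRing

namespace Paper

/-- A restricted Lie algebra structure (`p`-map) on a Lie algebra `L` over `K`: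
a `p`-operation satisfying `(a • x)^{[p]} = a^p • x^{[p]}`, `ad (x^{[p]}) = (ad x)^p`,
and Jacobson's formula, recorded here through the fact that
`(x+y)^{[p]} - x^{[p]} - y^{[p]}` is a sum of the Jacobson terms `s_i(x,y)`, which lie in the
`p`-th term of the lower central series of the subalgebra generated by `x` and `y`. -/
class PStructure (p : ℕ) (K : Type) (L : Type) [Field K] [LieRing L] [LieAlgebra K L] :
    Type where
  pMap : L → L
  smul_pMap : ∀ (a : K) (x : L), pMap (a • x) = a ^ p • pMap x
  ad_pMap : ∀ x : L, LieAlgebra.ad K L (pMap x) = LieAlgebra.ad K L x ^ p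
  jacobson_mem : ∀ x y : L,
    pMap (x + y) - pMap x - pMap y ∈
      Submodule.map (LieSubalgebra.lieSpan K L {x, y}).incl.toLinearMap
        (LieModule.lowerCentralSeries K ↥(LieSubalgebra.lieSpan K L {x, y})
          ↥(LieSubalgebra.lieSpan K L {x, y}) (p - 1)).toSubmodule

section Basic

variable (p : ℕ) (K L : Type) [Field K] [LieRing L] [LieAlgebra K L] [PStructure p K L]

/-- The `p`-map of a restricted Lie algebra. -/
def pmap (x : L) : L := PStructure.pMap (p := p) (K := K) x

/-- The nullcone `V(L) = {x | x^{[p]} = 0}`. -/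
def nullcone : Set L := {x | pmap p K L x = 0}

/-- A restricted Lie algebra is unipotent if some iterate of the `p`-map vanishes. -/
def IsUnipotent : Prop := ∃ n : ℕ, ∀ x : L, (pmap p K L)^[n] x = 0

/-- A `p`-subalgebra: a Lie subalgebra closed under the `p`-map. -/
def IsPSubalgebra (S : LieSubalgebra K L) : Prop := ∀ x ∈ S, pmap p K L x ∈ S

/-- `E(2,L)`: two-dimensional elementary abelian `p`-subalgebras, viewed as subspaces. -/
def E2 : Set (Submodule K L) :=
  {e | Module.finrank K ↥e = 2 ∧ (∀ x ∈ e, ∀ y ∈ e, ⁅x, y⁆ = (0 : L)) ∧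
    ∀ x ∈ e, pmap p K L x = 0}

/-- The elementary abelian `2`-planes lying inside a given subalgebra. -/
def E2in (S : LieSubalgebra K L) : Set (Submodule K L) :=
  {e ∈ E2 p K L | e ≤ S.toSubmodule}

/-- `Max_p(L)`: maximal proper `p`-subalgebras containing some elementary abelian `2`-plane. -/
def MaxP : Set (LieSubalgebra K L) :=
  {m | IsPSubalgebra p K L m ∧ m ≠ ⊤ ∧
    (∀ m' : LieSubalgebra K L, IsPSubalgebra p K L m' → m' ≠ ⊤ → m ≤ m' → m = m') ∧
    (E2in p K L m).Nonempty}

/-- The cyclic `p`-subalgebra `(K z)_p` generated by one element. -/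
def cyclicSpan (z : L) : Submodule K L :=
  Submodule.span K (Set.range fun j : ℕ => (pmap p K L)^[j] z)

end Basic

section Zariski

variable (K V : Type) [Field K] [AddCommGroup V] [Module K V]

/-- The algebra of polynomial functions on a vector space: the subalgebra of functions
generated by the linear forms. -/
def polyFunctions : Subalgebra K (V → K) :=
  Algebra.adjoin K (Set.range fun φ : Module.Dual K V => (φ : V → K))

/-- Zariski-closed subsets: common zero sets of families of polynomial functions. -/
def IsZariskiClosed (s : Set V) : Prop :=
  ∃ S : Set (V → K), S ⊆ (polyFunctions K V : Set (V → K)) ∧ s = {v : V | ∀ f ∈ S, f v = 0}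

/-- The Zariski topology on a vector space. -/
def zariskiTopology : TopologicalSpace V :=
  TopologicalSpace.generateFrom {s : Set V | IsZariskiClosed K V sᶜ}

/-- The topology on the set of subspaces of `V` (in particular on Grassmannians of `2`-planes),
coinduced by the span map from the (Zariski-topologized) space of linearly independent pairs. -/
def planeTopology : TopologicalSpace (Submodule K V) :=
  TopologicalSpace.coinduced
    (fun q : {q : V × V // LinearIndependent K ![q.1, q.2]} =>
      Submodule.span K {q.val.1, q.val.2})
    (TopologicalSpace.induced Subtype.val (zariskiTopology K (V × V)))

end Zariski

end Paper
namespace Paper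

section U0

variable (p : ℕ) (K L : Type) [Field K] [LieRing L] [LieAlgebra K L] [PStructure p K L]

/-- The defining relations of the restricted enveloping algebra: `x^p = x^{[p]}`. -/
inductive U0Rel : UniversalEnvelopingAlgebra K L → UniversalEnvelopingAlgebra K L → Prop
  | rel (x : L) : U0Rel (UniversalEnvelopingAlgebra.ι K x ^ p)
      (UniversalEnvelopingAlgebra.ι K (pmap p K L x))

/-- The restricted enveloping algebra `U₀(L)`. -/
def U0 : Type := RingQuot (U0Rel p K L)

noncomputable instance : Ring (U0 p K L) := inferInstanceAs (Ring (RingQuot _))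
noncomputable instance : Algebra K (U0 p K L) := inferInstanceAs (Algebra K (RingQuot _))

/-- The canonical map `L → U₀(L)`. -/
noncomputable def u0ι : L →ₗ[K] U0 p K L :=
  ((RingQuot.mkAlgHom K (U0Rel p K L)).toLinearMap).comp
    (UniversalEnvelopingAlgebra.ι (R := K) (L := L)).toLinearMap

variable {p K L}

lemma u0ι_lie (x y : L) :
    u0ι p K L ⁅x, y⁆ = u0ι p K L x * u0ι p K L y - u0ι p K L y * u0ι p K L x := by
  have h : UniversalEnvelopingAlgebra.ι (R := K) ⁅x, y⁆
      = UniversalEnvelopingAlgebra.ι (R := K) x * UniversalEnvelopingAlgebra.ι (R := K) y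
        - UniversalEnvelopingAlgebra.ι (R := K) y * UniversalEnvelopingAlgebra.ι (R := K) x := by
    rw [LieHom.map_lie, Ring.lie_def]
  have e : ∀ z : L, u0ι p K L z
      = RingQuot.mkAlgHom K (U0Rel p K L) (UniversalEnvelopingAlgebra.ι K z) := fun z => rfl
  rw [e, e, e, h, map_sub, map_mul, map_mul]
  rfl

/-- `U₀(L)` is a Lie module over `L` via left multiplication. -/
noncomputable instance : LieRingModule L (U0 p K L) where
  bracket x u := u0ι p K L x * u
  add_lie x y u := by
    show u0ι p K L (x + y) * u = u0ι p K L x * u + u0ι p K L y * u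
    rw [map_add, add_mul]
  lie_add x u v := by
    show u0ι p K L x * (u + v) = u0ι p K L x * u + u0ι p K L x * v
    rw [mul_add]
  leibniz_lie x y u := by
    show u0ι p K L x * (u0ι p K L y * u)
      = u0ι p K L ⁅x, y⁆ * u + u0ι p K L y * (u0ι p K L x * u)
    rw [u0ι_lie, sub_mul, mul_assoc, mul_assoc, sub_add_cancel]

noncomputable instance : LieModule K L (U0 p K L) where
  smul_lie t x u := by
    show u0ι p K L (t • x) * u = t • (u0ι p K L x * u)
    rw [map_smul, smul_mul_assoc]
  lie_smul t x u := by
    show u0ι p K L x * t • u = t • (u0ι p K L x * u)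
    rw [mul_smul_comm]

end U0

section Modules

variable (p : ℕ) (K L : Type) [Field K] [LieRing L] [LieAlgebra K L] [PStructure p K L]

/-- Pi types of Lie modules are Lie modules. -/
instance piLieRingModule {ι : Type} {M : ι → Type} [∀ i, AddCommGroup (M i)]
    [∀ i, LieRingModule L (M i)] : LieRingModule L (∀ i, M i) where
  bracket x f := fun i => ⁅x, f i⁆
  add_lie x y f := by funext i; exact add_lie x y (f i)
  lie_add x f g := by funext i; exact lie_add x (f i) (g i)
  leibniz_lie x y f := by funext i; exact leibniz_lie x y (f i)

instance piLieModule {ι : Type} {M : ι → Type} [∀ i, AddCommGroup (M i)] [∀ i, Module K (M i)]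
    [∀ i, LieRingModule L (M i)] [∀ i, LieModule K L (M i)] : LieModule K L (∀ i, M i) where
  smul_lie t x f := by funext i; exact smul_lie t x (f i)
  lie_smul t x f := by funext i; exact lie_smul t x (f i)

/-- Products of Lie modules are Lie modules. -/
instance prodLieRingModule {M N : Type} [AddCommGroup M] [AddCommGroup N]
    [LieRingModule L M] [LieRingModule L N] : LieRingModule L (M × N) where
  bracket x q := (⁅x, q.1⁆, ⁅x, q.2⁆)
  add_lie x y q := by ext <;> simp [add_lie]
  lie_add x q r := by ext <;> simp [lie_add]
  leibniz_lie x y q := by ext <;> simp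

instance prodLieModule {M N : Type} [AddCommGroup M] [AddCommGroup N] [Module K M] [Module K N]
    [LieRingModule L M] [LieRingModule L N] [LieModule K L M] [LieModule K L N] :
    LieModule K L (M × N) where
  smul_lie t x q := by
    refine Prod.ext ?_ ?_
    · exact smul_lie t x q.1
    · exact smul_lie t x q.2
  lie_smul t x q := by
    refine Prod.ext ?_ ?_
    · exact lie_smul t x q.1
    · exact lie_smul t x q.2

/-- A Lie module is restricted if the `p`-map acts as the `p`-th power of the action. -/
def IsRestrictedModule (M : Type) [AddCommGroup M] [Module K M] [LieRingModule L M]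
    [LieModule K L M] : Prop :=
  ∀ x : L, LieModule.toEnd K L M (pmap p K L x) = LieModule.toEnd K L M x ^ p

/-- A module is projective over `U₀(L)` iff it is a direct summand of a finite free module. -/
def IsProjectiveMod (P : Type) [AddCommGroup P] [Module K P] [LieRingModule L P]
    [LieModule K L P] : Prop :=
  ∃ (n : ℕ) (i : P →ₗ⁅K,L⁆ (Fin n → U0 p K L)) (r : (Fin n → U0 p K L) →ₗ⁅K,L⁆ P),
    r.comp i = LieModuleHom.id

/-- `M` is (up to iso) the kernel of a surjection from a free `U₀(L)`-module onto `N`;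
such kernels compute the Heller shift `Ω(N)` up to projective direct summands. -/
def IsSyzygyStep (N : Type) [AddCommGroup N] [Module K N] [LieRingModule L N] [LieModule K L N]
    (M : Type) [AddCommGroup M] [Module K M] [LieRingModule L M] [LieModule K L M] : Prop :=
  ∃ (n : ℕ) (f : (Fin n → U0 p K L) →ₗ⁅K,L⁆ N), Function.Surjective f ∧
    Nonempty (M ≃ₗ⁅K,L⁆ ↥(LieModuleHom.ker f))

end Modules

end Paper
namespace Paper

section Heller

variable (p : ℕ) (K L : Type) [Field K] [LieRing L] [LieAlgebra K L] [PStructure p K L]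

/-- `M` is (up to iso) an `n`-th syzygy of `N` over `U₀(L)`, computed by iterated
kernels of surjections from free modules. -/
def IsNthSyzygy : (n : ℕ) → (N : Type) → [AddCommGroup N] → [Module K N] →
    [LieRingModule L N] → [LieModule K L N] → (M : Type) → [AddCommGroup M] → [Module K M] →
    [LieRingModule L M] → [LieModule K L M] → Prop
  | 0, N, _, _, _, _, M, _, _, _, _ => Nonempty (M ≃ₗ⁅K,L⁆ N)
  | n + 1, N, _, _, _, _, M, _, _, _, _ =>
    ∃ (X : Type) (_ : AddCommGroup X) (_ : Module K X) (_ : LieRingModule L X)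
      (_ : LieModule K L X), IsSyzygyStep p K L N X ∧ IsNthSyzygy n X M

/-- Stable isomorphism: isomorphism after adding projective direct summands. -/
def StablyIso (M : Type) [AddCommGroup M] [Module K M] [LieRingModule L M] [LieModule K L M]
    (N : Type) [AddCommGroup N] [Module K N] [LieRingModule L N] [LieModule K L N] : Prop :=
  ∃ (P Q : Type) (_ : AddCommGroup P) (_ : Module K P) (_ : LieRingModule L P)
    (_ : LieModule K L P) (_ : AddCommGroup Q) (_ : Module K Q) (_ : LieRingModule L Q)
    (_ : LieModule K L Q), IsProjectiveMod p K L P ∧ IsProjectiveMod p K L Q ∧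
      Nonempty ((M × P) ≃ₗ⁅K,L⁆ (N × Q))

/-- `M ≅ (n-th syzygy of N) ⊕ (projective)`. -/
def StablyNthSyzygy (n : ℕ) (N : Type) [AddCommGroup N] [Module K N] [LieRingModule L N]
    [LieModule K L N] (M : Type) [AddCommGroup M] [Module K M] [LieRingModule L M]
    [LieModule K L M] : Prop :=
  ∃ (X : Type) (_ : AddCommGroup X) (_ : Module K X) (_ : LieRingModule L X)
    (_ : LieModule K L X), IsNthSyzygy p K L n N X ∧ StablyIso p K L M X

/-- `M ≅ Ω^z(N) ⊕ (projective)` for `z : ℤ`; for negative `z` this is expressed by the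
(equivalent) condition that `N` is stably the `(-z)`-th syzygy of `M`. -/
def IsStableHeller (z : ℤ) (N : Type) [AddCommGroup N] [Module K N] [LieRingModule L N]
    [LieModule K L N] (M : Type) [AddCommGroup M] [Module K M] [LieRingModule L M]
    [LieModule K L M] : Prop :=
  ∃ n : ℕ, (z = (n : ℤ) ∧ StablyNthSyzygy p K L n N M) ∨
    (z = -(n : ℤ) ∧ StablyNthSyzygy p K L n M N)

end Heller

section Char

variable (p : ℕ) (K L : Type) [Field K] [LieRing L] [LieAlgebra K L] [PStructure p K L]

/-- A character of the restricted Lie algebra, i.e. an algebra homomorphism `U₀(L) → K`: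
equivalently, a linear form vanishing on brackets and compatible with the `p`-map. -/
structure PCharacter : Type where
  toLinear : L →ₗ[K] K
  map_lie' : ∀ x y : L, toLinear ⁅x, y⁆ = 0
  map_pmap' : ∀ x : L, toLinear (pmap p K L x) = toLinear x ^ p

end Char

section CharMod

variable {p : ℕ} {K L : Type} [Field K] [LieRing L] [LieAlgebra K L] [PStructure p K L]

/-- The one-dimensional module `K_λ` attached to a character `λ`. -/
def CharMod (_lam : PCharacter p K L) : Type := K

namespace CharMod

instance (lam : PCharacter p K L) : AddCommGroup (CharMod lam) :=
  inferInstanceAs (AddCommGroup K)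

instance (lam : PCharacter p K L) : Module K (CharMod lam) := inferInstanceAs (Module K K)

instance (lam : PCharacter p K L) : LieRingModule L (CharMod lam) where
  bracket x a := lam.toLinear x • a
  add_lie x y a := by
    show lam.toLinear (x + y) • a = lam.toLinear x • a + lam.toLinear y • a
    rw [map_add, add_smul]
  lie_add x a b := by
    show lam.toLinear x • (a + b) = lam.toLinear x • a + lam.toLinear x • b
    rw [smul_add]
  leibniz_lie x y a := by
    show lam.toLinear x • lam.toLinear y • a
      = lam.toLinear ⁅x, y⁆ • a + lam.toLinear y • lam.toLinear x • a
    rw [lam.map_lie', zero_smul, zero_add, smul_comm]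

instance (lam : PCharacter p K L) : LieModule K L (CharMod lam) where
  smul_lie t x a := by
    show lam.toLinear (t • x) • a = t • lam.toLinear x • a
    rw [map_smul, smul_assoc]
  lie_smul t x a := by
    show lam.toLinear x • t • a = t • lam.toLinear x • a
    rw [smul_comm]

end CharMod

end CharMod

section Char2

variable (p : ℕ) (K L : Type) [Field K] [LieRing L] [LieAlgebra K L] [PStructure p K L]

/-- The trivial (zero) character. -/
def trivChar (hp : p ≠ 0) : PCharacter p K L where
  toLinear := 0
  map_lie' := by intro x y; simp
  map_pmap' := by intro x; simp [zero_pow hp]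

/-- An endotrivial module: `M ⊗ M* ≅ K ⊕ (projective)` over `U₀(L)`. -/
def IsEndotrivial (hp : p ≠ 0) (M : Type) [AddCommGroup M] [Module K M] [LieRingModule L M]
    [LieModule K L M] : Prop :=
  ∃ (P : Type) (_ : AddCommGroup P) (_ : Module K P) (_ : LieRingModule L P)
    (_ : LieModule K L P), IsProjectiveMod p K L P ∧
      Nonempty ((M ⊗[K] Module.Dual K M) ≃ₗ⁅K,L⁆ ((CharMod (trivChar p K L hp)) × P))

end Char2

end Paper
namespace Paper

section Counit

variable (p : ℕ) (K L : Type) [Field K] [LieRing L] [LieAlgebra K L] [PStructure p K L]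

/-- The zero Lie algebra homomorphism `L → K`. -/
def zeroLieHom : L →ₗ⁅K⁆ K :=
  { (0 : L →ₗ[K] K) with map_lie' := by intro x y; simp }

/-- The counit (augmentation) `ε : U₀(L) → K`. -/
noncomputable def counit (hp : p ≠ 0) : U0 p K L →ₐ[K] K :=
  RingQuot.liftAlgHom K ⟨UniversalEnvelopingAlgebra.lift K (zeroLieHom K L), by
    rintro x y ⟨z⟩
    rw [map_pow, UniversalEnvelopingAlgebra.lift_ι_apply, UniversalEnvelopingAlgebra.lift_ι_apply]
    show (0 : K) ^ p = (0 : K)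
    exact zero_pow hp⟩

/-- A minimal step: kernel of a minimal surjection from a free module, i.e. a surjection
whose kernel is contained in `rad · F` (with the radical of `U₀` of a unipotent algebra
given by the augmentation ideal `ker ε`).  This computes the honest Heller shift `Ω(N)`. -/
def IsMinSyzygyStep (hp : p ≠ 0) (N : Type) [AddCommGroup N] [Module K N] [LieRingModule L N]
    [LieModule K L N] (M : Type) [AddCommGroup M] [Module K M] [LieRingModule L M]
    [LieModule K L M] : Prop :=
  ∃ (n : ℕ) (f : (Fin n → U0 p K L) →ₗ⁅K,L⁆ N), Function.Surjective f ∧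
    (LieModuleHom.ker f).toSubmodule ≤ Submodule.restrictScalars K
      ((RingHom.ker (counit p K L hp)) • (⊤ : Submodule (U0 p K L) (Fin n → U0 p K L))) ∧
    Nonempty (M ≃ₗ⁅K,L⁆ ↥(LieModuleHom.ker f))

/-- `M` is the `n`-th minimal syzygy (Heller shift `Ωⁿ N`) of `N`. -/
def IsMinNthSyzygy (hp : p ≠ 0) : (n : ℕ) → (N : Type) → [AddCommGroup N] → [Module K N] →
    [LieRingModule L N] → [LieModule K L N] → (M : Type) → [AddCommGroup M] → [Module K M] →
    [LieRingModule L M] → [LieModule K L M] → Prop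
  | 0, N, _, _, _, _, M, _, _, _, _ => Nonempty (M ≃ₗ⁅K,L⁆ N)
  | n + 1, N, _, _, _, _, M, _, _, _, _ =>
    ∃ (X : Type) (_ : AddCommGroup X) (_ : Module K X) (_ : LieRingModule L X)
      (_ : LieModule K L X), IsMinSyzygyStep p K L hp N X ∧ IsMinNthSyzygy hp n X M

end Counit

section E2Subalg

variable (p : ℕ) (K L : Type) [Field K] [LieRing L] [LieAlgebra K L] [PStructure p K L]

/-- An elementary abelian plane `e ∈ E(2,L)` as a Lie subalgebra. -/
def E2.subalg (e : Submodule K L) (he : e ∈ E2 p K L) : LieSubalgebra K L :=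
  { e with
    lie_mem' := fun {x y} hx hy => Set.mem_of_eq_of_mem (he.2.1 x hx y hy) e.zero_mem }

/-- The restricted structure on an elementary abelian plane: the `p`-map vanishes. -/
def E2.pstruct (e : Submodule K L) (he : e ∈ E2 p K L) (hp : p ≠ 0) :
    PStructure p K ↥(E2.subalg p K L e he) where
  pMap _ := 0
  smul_pMap a x := by simp
  ad_pMap x := by
    have hx : LieAlgebra.ad K ↥(E2.subalg p K L e he) x = 0 := by
      ext y
      show ((⁅x, y⁆ : ↥(E2.subalg p K L e he)) : L) = ((0 : ↥(E2.subalg p K L e he)) : L)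
      rw [LieSubalgebra.coe_bracket, ZeroMemClass.coe_zero]
      exact he.2.1 _ x.2 _ y.2
    rw [hx, zero_pow hp]
    exact (LieAlgebra.ad K ↥(E2.subalg p K L e he)).map_zero
  jacobson_mem x y := by simp

/-- The syzygy function of an endotrivial module: `s_M(e) = s` iff the restriction of `M`
to `e` is `Ω^s(K) ⊕ (projective)` over `U₀(e)`. -/
def SyzygyFunctionEq (hp : p ≠ 0) (e : Submodule K L) (he : e ∈ E2 p K L) (M : Type)
    [AddCommGroup M] [Module K M] [LieRingModule L M] [LieModule K L M] (s : ℤ) : Prop :=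
  letI := E2.pstruct p K L e he hp
  IsStableHeller p K ↥(E2.subalg p K L e he) s
    (CharMod (trivChar p K ↥(E2.subalg p K L e he) hp)) M

/-- The degree function `deg_M(e) = dim M / 𝔎(M|_e)`, where the generic kernel
`𝔎(M|_e) = Σ_{x ∈ ℙ(e)} ker x_M`. -/
noncomputable def degE (e : Submodule K L) (M : Type) [AddCommGroup M] [Module K M]
    [LieRingModule L M] [LieModule K L M] : ℕ :=
  Module.finrank K M -
    Module.finrank K ↥(⨆ (x : L) (_ : x ∈ e ∧ x ≠ 0),
      LinearMap.ker (LieModule.toEnd K L M x))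

end E2Subalg

end Paper

namespace Paper

open Topology

variable {p : ℕ} {K L : Type} [Field K] [LieRing L] [LieAlgebra K L] [PStructure p K L]

lemma pmap_smul (a : K) (x : L) : pmap p K L (a • x) = a ^ p • pmap p K L x :=
  PStructure.smul_pMap a x

lemma pmap_zero (hp : p ≠ 0) : pmap p K L 0 = 0 := by
  have := pmap_smul (p := p) (K := K) (0 : K) (0 : L)
  rw [zero_smul, zero_pow hp, zero_smul] at this
  exact this

lemma bracket_span_pair_eq_zero {x y : L} (hxy : ⁅x, y⁆ = 0) {a b : L}
    (ha : a ∈ Submodule.span K {x, y}) (hb : b ∈ Submodule.span K {x, y}) : ⁅a, b⁆ = 0 := by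
  obtain ⟨α, β, rfl⟩ := Submodule.mem_span_pair.mp ha
  obtain ⟨γ, δ, rfl⟩ := Submodule.mem_span_pair.mp hb
  have hyx : ⁅y, x⁆ = 0 := by rw [← lie_skew, hxy, neg_zero]
  simp [lie_add, add_lie, lie_smul, smul_lie, hxy, hyx]

/-- Additivity of the `p`-map on commuting elements (for `p ≥ 2`). -/
lemma pmap_add_of_commute (hp : 2 ≤ p) {x y : L} (hxy : ⁅x, y⁆ = 0) :
    pmap p K L (x + y) = pmap p K L x + pmap p K L y := by
  set S := LieSubalgebra.lieSpan K L {x, y} with hS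
  -- the Lie span is contained in the linear span, on which all brackets vanish
  have hle : S ≤ { Submodule.span K {x, y} with
      lie_mem' := fun {a b} ha hb =>
        (bracket_span_pair_eq_zero hxy ha hb) ▸ (Submodule.span K {x, y}).zero_mem } := by
    apply LieSubalgebra.lieSpan_le.mpr
    intro v hv
    rcases hv with rfl | hv
    · exact Submodule.subset_span (Set.mem_insert _ _)
    · exact Submodule.subset_span (Set.mem_insert_iff.mpr (Or.inr hv))
  have habel : IsLieAbelian ↥S := by
    constructor
    intro a b
    ext
    exact bracket_span_pair_eq_zero hxy (hle a.2) (hle b.2)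
  have hlcs : LieModule.lowerCentralSeries K ↥S ↥S (p - 1) = ⊥ := by
    have h1 : LieModule.lowerCentralSeries K ↥S ↥S 1 = ⊥ :=
      (LieModule.trivial_iff_lower_central_eq_bot K ↥S ↥S).mp habel
    have := LieModule.antitone_lowerCentralSeries K ↥S ↥S
      (show 1 ≤ p - 1 by omega)
    rw [h1] at this
    exact le_bot_iff.mp this
  have hmem := PStructure.jacobson_mem (p := p) (K := K) x y
  rw [← hS, hlcs] at hmem
  simp only [LieSubmodule.bot_toSubmodule, Submodule.map_bot, Submodule.mem_bot] at hmem
  have : pmap p K L (x + y) - pmap p K L x - pmap p K L y = 0 := hmem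
  linear_combination (norm := abel) this

/-- The `p`-map of an element of an elementary abelian plane spanned by two commuting
`p`-nilpotent elements vanishes. -/
lemma pmap_eq_zero_of_mem_span (hp : 2 ≤ p) {x y : L} (hxy : ⁅x, y⁆ = 0)
    (hx : pmap p K L x = 0) (hy : pmap p K L y = 0) {v : L}
    (hv : v ∈ Submodule.span K {x, y}) : pmap p K L v = 0 := by
  obtain ⟨α, β, rfl⟩ := Submodule.mem_span_pair.mp hv
  have hc : ⁅α • x, β • y⁆ = 0 := by simp [lie_smul, smul_lie, hxy]
  rw [pmap_add_of_commute hp hc, pmap_smul, pmap_smul, hx, hy, smul_zero, smul_zero, add_zero]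

lemma range_fin2 (a b : L) : Set.range ![a, b] = {a, b} := by
  ext v
  simp [Fin.exists_fin_two, or_comm]

lemma span_pair_mem_E2 (hp : 2 ≤ p) {a b : L} (hab : ⁅a, b⁆ = 0)
    (ha : pmap p K L a = 0) (hb : pmap p K L b = 0) (hli : LinearIndependent K ![a, b]) :
    Submodule.span K {a, b} ∈ E2 p K L := by
  refine ⟨?_, ?_, ?_⟩
  · have := finrank_span_eq_card hli
    rw [range_fin2] at this
    simpa using this
  · intro v hv w hw
    exact bracket_span_pair_eq_zero hab hv hw
  · intro v hv
    exact pmap_eq_zero_of_mem_span hp hab ha hb hv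

set_option linter.unusedSectionVars false

lemma ad_pmap_iterate (x : L) (k : ℕ) :
    LieAlgebra.ad K L ((pmap p K L)^[k] x) = LieAlgebra.ad K L x ^ (p ^ k) := by
  induction k with
  | zero => simp
  | succ k ih =>
      rw [Function.iterate_succ_apply',
        show pmap p K L ((pmap p K L)^[k] x) = PStructure.pMap (p := p) (K := K) _ from rfl]
      rw [show (PStructure.pMap (p := p) (K := K) ((pmap p K L)^[k] x)) =
        pmap p K L ((pmap p K L)^[k] x) from rfl]
      have := PStructure.ad_pMap (p := p) (K := K) ((pmap p K L)^[k] x)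
      rw [show pmap p K L ((pmap p K L)^[k] x) = PStructure.pMap (p := p) (K := K) _ from rfl,
        this, ih, ← pow_mul, pow_succ]

lemma isNilpotent_of_unipotent [Module.Finite K L] (hu : IsUnipotent p K L) :
    LieRing.IsNilpotent L := by
  obtain ⟨n, hn⟩ := hu
  rw [LieAlgebra.isNilpotent_iff_forall (R := K)]
  intro x
  exact ⟨p ^ n, by rw [← ad_pmap_iterate, hn x, map_zero]⟩

lemma central_pmap_central (hp : p ≠ 0) {a : L} (ha : ∀ w : L, ⁅w, a⁆ = 0) (w : L) :
    ⁅w, pmap p K L a⁆ = 0 := by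
  have hada : LieAlgebra.ad K L a = 0 := by
    ext v
    simp only [LieAlgebra.ad_apply, LinearMap.zero_apply]
    rw [← neg_eq_zero, ← lie_skew]
    simp [ha v]
  have : LieAlgebra.ad K L (pmap p K L a) = 0 := by
    have := PStructure.ad_pMap (p := p) (K := K) a
    rw [show PStructure.pMap (p := p) (K := K) a = pmap p K L a from rfl] at this
    rw [this, hada, zero_pow hp]
  have h2 : ⁅pmap p K L a, w⁆ = 0 := by
    have h := congrFun (congrArg DFunLike.coe this) w
    simpa using h
  rw [← lie_skew, h2, neg_zero]

/-- A unipotent restricted Lie algebra that is nontrivial in a suitable sense has a nonzero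
central element killed by the `p`-map. -/
lemma exists_central_pnil [Module.Finite K L] (hp : p ≠ 0) (hu : IsUnipotent p K L)
    [Nontrivial L] :
    ∃ z : L, z ≠ 0 ∧ (∀ w : L, ⁅w, z⁆ = 0) ∧ pmap p K L z = 0 := by
  haveI := isNilpotent_of_unipotent (p := p) hu
  haveI : Nontrivial (LieAlgebra.center K L) := LieAlgebra.non_trivial_center_of_isNilpotent (R := K) (L := L)
  obtain ⟨c, hc⟩ := exists_ne (0 : LieAlgebra.center K L)
  have hcmem : ∀ w : L, ⁅w, (c : L)⁆ = 0 := c.2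
  have hc0 : (c : L) ≠ 0 := fun h => hc (Subtype.ext h)
  -- descend along the p-map
  obtain ⟨n, hn⟩ := hu
  have hP : ∃ m, (pmap p K L)^[m] (c : L) = 0 := ⟨n, hn c⟩
  classical
  set m := Nat.find hP with hm
  have hm0 : m ≠ 0 := by
    intro h
    have := Nat.find_spec hP
    rw [← hm, h] at this
    exact hc0 this
  refine ⟨(pmap p K L)^[m - 1] (c : L), ?_, ?_, ?_⟩
  · exact fun h => Nat.find_min hP (m := m - 1) (by omega) h
  · -- centrality is preserved by pmap
    have : ∀ k, ∀ w : L, ⁅w, (pmap p K L)^[k] (c : L)⁆ = 0 := by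
      intro k
      induction k with
      | zero => exact hcmem
      | succ k ih =>
          intro w
          rw [Function.iterate_succ_apply']
          exact central_pmap_central hp ih w
    exact this (m - 1)
  · have h3 : pmap p K L ((pmap p K L)^[m - 1] (c : L)) = (pmap p K L)^[m - 1 + 1] (c : L) :=
      (Function.iterate_succ_apply' _ _ _).symm
    rw [h3, show m - 1 + 1 = m by omega]
    exact Nat.find_spec hP


section ZarLemmas
variable {K V W : Type} [Field K] [AddCommGroup V] [Module K V] [AddCommGroup W] [Module K W]

lemma zar_isOpen {s : Set V} (h : IsZariskiClosed K V sᶜ) :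
    IsOpen[zariskiTopology K V] s :=
  TopologicalSpace.GenerateOpen.basic s h

lemma zar_isClosed {s : Set V} (h : IsZariskiClosed K V s) :
    IsClosed[zariskiTopology K V] s := by
  letI := zariskiTopology K V
  rw [← isOpen_compl_iff]
  exact zar_isOpen (by simpa using h)

lemma isZariskiClosed_singleton (v : V) : IsZariskiClosed K V {v} := by
  refine ⟨(fun φ : Module.Dual K V => (φ : V → K) - Function.const V (φ v)) '' Set.univ,
    ?_, ?_⟩
  · rintro f ⟨φ, -, rfl⟩
    exact sub_mem (Algebra.subset_adjoin ⟨φ, rfl⟩)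
      (Subalgebra.algebraMap_mem (polyFunctions K V) (φ v))
  · ext w
    simp only [Set.mem_setOf_eq, Set.mem_singleton_iff]
    constructor
    · rintro rfl f ⟨φ, -, rfl⟩; simp
    · intro h
      have : ∀ φ : Module.Dual K V, φ (w - v) = 0 := by
        intro φ
        have := h _ ⟨φ, Set.mem_univ _, rfl⟩
        simp only [Pi.sub_apply, Function.const_apply] at this
        simp [map_sub, sub_eq_zero, this]
      exact (sub_eq_zero.mp ((Module.forall_dual_apply_eq_zero_iff K _).mp this))

lemma zar_isClosed_singleton (v : V) : IsClosed[zariskiTopology K V] {v} :=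
  zar_isClosed (isZariskiClosed_singleton v)

lemma zar_isClosed_finite {s : Set V} (hs : s.Finite) : IsClosed[zariskiTopology K V] s := by
  letI := zariskiTopology K V
  haveI : T1Space V := ⟨fun v => zar_isClosed_singleton v⟩
  exact hs.isClosed



lemma poly_line {f : V → K} (hf : f ∈ polyFunctions K V) (z : V) :
    ∃ P : Polynomial K, ∀ t : K, f (t • z) = P.eval t := by
  induction hf using Algebra.adjoin_induction with
  | mem f hf =>
      obtain ⟨φ, rfl⟩ := hf
      exact ⟨Polynomial.C (φ z) * Polynomial.X, fun t => by
        show φ (t • z) = _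
        rw [map_smul, smul_eq_mul, Polynomial.eval_mul, Polynomial.eval_C, Polynomial.eval_X,
          mul_comm]⟩
  | algebraMap c => exact ⟨Polynomial.C c, fun t => by simp [Algebra.algebraMap_eq_smul_one]⟩
  | add f g hf hg ihf ihg =>
      obtain ⟨P, hP⟩ := ihf; obtain ⟨Q, hQ⟩ := ihg
      exact ⟨P + Q, fun t => by simp [hP t, hQ t]⟩
  | mul f g hf hg ihf ihg =>
      obtain ⟨P, hP⟩ := ihf; obtain ⟨Q, hQ⟩ := ihg
      exact ⟨P * Q, fun t => by simp [hP t, hQ t]⟩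

lemma zar_open_line {U : Set V} (hU : IsOpen[zariskiTopology K V] U) (z : V) :
    (Set.range (· • z : K → V) \ U).Finite ∨ U ∩ Set.range (· • z : K → V) = ∅ := by
  induction hU with
  | basic s hs =>
      obtain ⟨S, hS, hSeq⟩ := hs
      by_cases h : ∀ f ∈ S, ∀ t : K, f (t • z) = 0
      · right
        rw [Set.eq_empty_iff_forall_notMem]
        rintro v ⟨hv, t, rfl⟩
        have : t • z ∈ sᶜ := by rw [hSeq]; exact fun f hf => h f hf t
        exact this hv
      · left
        push_neg at h
        obtain ⟨f, hfS, t0, ht0⟩ := h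
        obtain ⟨P, hP⟩ := poly_line (hS hfS) z
        have hPne : P ≠ 0 := fun h => ht0 (by rw [hP t0, h, Polynomial.eval_zero])
        have : Set.range (· • z : K → V) \ s ⊆ (· • z) '' {t : K | P.IsRoot t} := by
          rintro v ⟨⟨t, rfl⟩, hv⟩
          have : t • z ∈ sᶜ := hv
          rw [hSeq] at this
          exact ⟨t, by rw [Set.mem_setOf_eq, Polynomial.IsRoot, ← hP t]; exact this f hfS, rfl⟩
        exact ((Polynomial.finite_setOf_isRoot hPne).image _).subset this
  | univ => left; simp
  | inter U U' hU hU' ihU ihU' =>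
      rcases ihU with h | h
      · rcases ihU' with h' | h'
        · left
          have : Set.range (· • z : K → V) \ (U ∩ U')
              ⊆ (Set.range (· • z : K → V) \ U) ∪ (Set.range (· • z : K → V) \ U') := by
            rintro v ⟨hv, hnv⟩
            by_cases hvU : v ∈ U
            · exact Or.inr ⟨hv, fun hvU' => hnv ⟨hvU, hvU'⟩⟩
            · exact Or.inl ⟨hv, hvU⟩
          exact (h.union h').subset this
        · right
          rw [Set.eq_empty_iff_forall_notMem] at h' ⊢
          rintro v ⟨⟨-, hvU'⟩, hr⟩
          exact h' v ⟨hvU', hr⟩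
      · right
        rw [Set.eq_empty_iff_forall_notMem] at h ⊢
        rintro v ⟨⟨hvU, -⟩, hr⟩
        exact h v ⟨hvU, hr⟩
  | sUnion S hS ih =>
      by_cases h : ∃ U ∈ S, (Set.range (· • z : K → V) \ U).Finite
      · obtain ⟨U, hUS, hUf⟩ := h
        left
        exact hUf.subset fun v ⟨hv, hnv⟩ => ⟨hv, fun hvU => hnv (Set.mem_sUnion.mpr ⟨U, hUS, hvU⟩)⟩
      · right
        push_neg at h
        rw [Set.eq_empty_iff_forall_notMem]
        rintro v ⟨hv, hr⟩
        obtain ⟨U, hUS, hvU⟩ := Set.mem_sUnion.mp hv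
        rcases ih U hUS with h' | h'
        · exact h U hUS h'
        · rw [Set.eq_empty_iff_forall_notMem] at h'
          exact h' v ⟨hvU, hr⟩

lemma zar_closed_line {C : Set V} (hC : IsClosed[zariskiTopology K V] C) (z : V) :
    (C ∩ Set.range (· • z : K → V)).Finite ∨ Set.range (· • z : K → V) ⊆ C := by
  letI := zariskiTopology K V
  rcases zar_open_line (isOpen_compl_iff.mpr hC) z with h | h
  · left
    exact h.subset fun v ⟨hvC, hr⟩ => ⟨hr, fun hvc => hvc hvC⟩
  · right
    intro v hv
    by_contra hvC
    exact (Set.eq_empty_iff_forall_notMem.mp h) v ⟨hvC, hv⟩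


/-- Pullback of a polynomial function along an affine map is polynomial. -/
lemma poly_comp_affine {f : W → K} (hf : f ∈ polyFunctions K W) (A : V →ₗ[K] W) (c : W) :
    (fun v => f (A v + c)) ∈ polyFunctions K V := by
  induction hf using Algebra.adjoin_induction with
  | mem f hf =>
      obtain ⟨φ, rfl⟩ := hf
      have : (fun v => φ (A v + c)) = (fun v => (φ.comp A) v) + Function.const V (φ c) := by
        funext v; simp [map_add]
      rw [this]
      exact add_mem (Algebra.subset_adjoin ⟨φ.comp A, rfl⟩)
        (Subalgebra.algebraMap_mem (polyFunctions K V) (φ c))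
  | algebraMap c' => exact Subalgebra.algebraMap_mem _ c'
  | add f g hf hg ihf ihg => exact add_mem ihf ihg
  | mul f g hf hg ihf ihg => exact mul_mem ihf ihg

/-- Affine maps are continuous for the Zariski topologies. -/
lemma zar_continuous_affine (A : V →ₗ[K] W) (c : W) :
    Continuous[zariskiTopology K V, zariskiTopology K W] (fun v => A v + c) := by
  letI := zariskiTopology K V
  letI := zariskiTopology K W
  rw [show (zariskiTopology K W) = TopologicalSpace.generateFrom
      {s : Set W | IsZariskiClosed K W sᶜ} from rfl, continuous_generateFrom_iff]
  rintro s ⟨S, hS, hSeq⟩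
  refine TopologicalSpace.GenerateOpen.basic _
    ⟨(fun f : W → K => fun v : V => f (A v + c)) '' S, ?_, ?_⟩
  · rintro g ⟨f, hf, rfl⟩
    exact poly_comp_affine (hS hf) A c
  · ext v
    simp only [Set.mem_compl_iff, Set.mem_preimage, Set.mem_setOf_eq]
    constructor
    · rintro hv f ⟨f₀, hf₀, rfl⟩
      have : A v + c ∈ sᶜ := hv
      rw [hSeq] at this
      exact this f₀ hf₀
    · intro hv hs
      have : A v + c ∈ sᶜ := by
        rw [hSeq]
        intro f hf
        exact hv _ ⟨f, hf, rfl⟩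
      exact this hs

/-- The affine line is preirreducible. -/
lemma zar_preirreducible_univ [Infinite K] :
    @IsPreirreducible K (zariskiTopology K K) Set.univ := by
  letI := zariskiTopology K K
  rintro U U' hU hU' ⟨u, -, hu⟩ ⟨u', -, hu'⟩
  have h1 : (Set.range (· • (1 : K) : K → K)) = Set.univ := by
    ext t; exact ⟨fun _ => trivial, fun _ => ⟨t, by simp⟩⟩
  have cof : ∀ {W : Set K}, IsOpen W → W.Nonempty → Wᶜ.Finite := by
    intro W hW ⟨w, hw⟩
    rcases zar_open_line (K := K) (V := K) hW (1 : K) with h | h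
    · rw [h1] at h
      exact h.subset fun v hv => ⟨trivial, hv⟩
    · rw [h1, Set.inter_univ] at h
      exact absurd (h ▸ hw : w ∈ (∅ : Set K)) (Set.notMem_empty w)
  have hUc := cof hU ⟨u, hu⟩
  have hU'c := cof hU' ⟨u', hu'⟩
  have : (U ∩ U').Nonempty := by
    by_contra hne
    rw [Set.not_nonempty_iff_eq_empty] at hne
    have hsub : (Set.univ : Set K) ⊆ Uᶜ ∪ U'ᶜ := by
      rintro t -
      by_cases htU : t ∈ U
      · exact Or.inr fun htU' => (Set.eq_empty_iff_forall_notMem.mp hne) t ⟨htU, htU'⟩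
      · exact Or.inl htU
    exact Set.infinite_univ ((hUc.union hU'c).subset hsub)
  obtain ⟨t, ht⟩ := this
  exact ⟨t, trivial, ht⟩



end ZarLemmas

section Krull
open Topology
variable {K V : Type} [Field K] [AddCommGroup V] [Module K V]

lemma isZariskiClosed_submodule (S : Submodule K V) : IsZariskiClosed K V (S : Set V) := by
  refine ⟨(fun φ : Module.Dual K V => (φ : V → K)) '' {φ | ∀ s ∈ S, φ s = 0}, ?_, ?_⟩
  · rintro f ⟨φ, -, rfl⟩
    exact Algebra.subset_adjoin ⟨φ, rfl⟩
  · ext v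
    simp only [SetLike.mem_coe, Set.mem_setOf_eq]
    constructor
    · rintro hv f ⟨φ, hφ, rfl⟩
      exact hφ v hv
    · intro hv
      by_contra hvS
      have hq : S.mkQ v ≠ 0 := by
        rw [Submodule.mkQ_apply, ne_eq, Submodule.Quotient.mk_eq_zero]
        exact hvS
      have := (Module.forall_dual_apply_eq_zero_iff K (S.mkQ v)).not.mpr hq
      push_neg at this
      obtain ⟨ψ, hψ⟩ := this
      refine hψ ?_
      have := hv (fun w => ψ (S.mkQ w)) ⟨ψ.comp S.mkQ, fun s hs => by
        simp [Submodule.Quotient.mk_eq_zero, hs, (Submodule.Quotient.mk_eq_zero S).mpr hs], rfl⟩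
      simpa using this

lemma not_two_le_krull_of_subset_line {s : Set V} (z : V)
    (hs : s ⊆ Set.range (· • z : K → V)) :
    ¬ (2 ≤ @topologicalKrullDim ↥s
      (TopologicalSpace.induced Subtype.val (zariskiTopology K V))) := by
  letI tL := zariskiTopology K V
  letI tX : TopologicalSpace ↥s := TopologicalSpace.induced Subtype.val (zariskiTopology K V)
  intro h
  rw [topologicalKrullDim] at h
  by_cases hne : Nonempty (TopologicalSpace.IrreducibleCloseds ↥s)
  swap
  · rw [not_nonempty_iff] at hne
    rw [Order.krullDim_eq_bot] at h
    exact absurd h (by simp)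
  rw [Order.krullDim_eq_iSup_length] at h
  have h2 : ∃ q : LTSeries (TopologicalSpace.IrreducibleCloseds ↥s), 2 ≤ q.length := by
    by_contra hq
    push_neg at hq
    have hle : (⨆ q : LTSeries (TopologicalSpace.IrreducibleCloseds ↥s), (q.length : ℕ∞)) ≤ 1 :=
      iSup_le fun q => by exact_mod_cast Nat.lt_succ_iff.mp (hq q)
    have : (2 : WithBot ℕ∞) ≤ (1 : ℕ∞) := le_trans h (by exact_mod_cast hle)
    norm_num at this
  obtain ⟨q, hq⟩ := h2
  set T0 := q.toFun ⟨0, by omega⟩ with hT0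
  set T1 := q.toFun ⟨1, by omega⟩ with hT1
  set T2 := q.toFun ⟨2, by omega⟩ with hT2
  have h01 : T0 < T1 := q.strictMono (by rw [Fin.lt_def]; norm_num)
  have h12 : T1 < T2 := q.strictMono (by rw [Fin.lt_def]; norm_num)
  -- T1 is closed in the subtype, hence comes from a closed set of V
  obtain ⟨C, hC, hCeq⟩ := isClosed_induced_iff.mp T1.isClosed'
  rcases zar_closed_line (K := K) (V := V) hC z with hfin | hsub
  · -- T1 is finite with at least two elements, contradicting irreducibility
    have hT1fin : (Subtype.val '' (T1 : Set ↥s)).Finite := by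
      apply hfin.subset
      rintro v ⟨a, ha, rfl⟩
      have haC : a ∈ Subtype.val ⁻¹' C := by
        show a ∈ Subtype.val ⁻¹' C
        rw [hCeq]
        exact ha
      exact ⟨haC, hs a.2⟩
    obtain ⟨a, ha⟩ := T0.isIrreducible'.1
    have haT1 : a ∈ (T1 : Set ↥s) := le_of_lt h01 ha
    obtain ⟨b, hbT1, hbT0⟩ := Set.not_subset.mp fun hsub' => (lt_irrefl T0 (lt_of_lt_of_le h01 hsub'))
    have hab : a ≠ b := fun hab => hbT0 (hab ▸ ha)
    -- two open sets separating a within the finite set T1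
    set F := Subtype.val '' (T1 : Set ↥s) with hF
    have hFa : IsClosed[tL] (F \ {a.val}) := zar_isClosed_finite (hT1fin.subset Set.diff_subset)
    have hUopen : IsOpen[tX] (Subtype.val ⁻¹' (F \ {a.val})ᶜ) :=
      isOpen_induced (by rw [isOpen_compl_iff]; exact hFa)
    have hU'open : IsOpen[tX] (Subtype.val ⁻¹' ({a.val}ᶜ)) :=
      isOpen_induced (by rw [isOpen_compl_iff]; exact zar_isClosed_singleton a.val)
    have h1 : ((T1 : Set ↥s) ∩ Subtype.val ⁻¹' (F \ {a.val})ᶜ).Nonempty := by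
      refine ⟨a, haT1, ?_⟩
      simp only [Set.mem_preimage, Set.mem_compl_iff, Set.mem_diff, Set.mem_singleton_iff]
      tauto
    have h2 : ((T1 : Set ↥s) ∩ Subtype.val ⁻¹' ({a.val}ᶜ)).Nonempty := by
      refine ⟨b, hbT1, ?_⟩
      simp only [Set.mem_preimage, Set.mem_compl_iff, Set.mem_singleton_iff]
      exact fun h => hab (Subtype.ext h.symm)
    obtain ⟨c, hcT1, hc1, hc2⟩ := T1.isIrreducible'.2 _ _ hUopen hU'open h1 h2
    simp only [Set.mem_preimage, Set.mem_compl_iff, Set.mem_diff, Set.mem_singleton_iff] at hc1 hc2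
    have : c.val ∈ F := ⟨c, hcT1, rfl⟩
    tauto
  · -- the line is inside C, so T2 ≤ T1, contradiction
    have : (T2 : Set ↥s) ⊆ (T1 : Set ↥s) := by
      intro a _
      have haC : a ∈ Subtype.val ⁻¹' C := hsub (hs a.2)
      show a ∈ T1.carrier
      rw [← hCeq]
      exact haC
    exact absurd this (not_le_of_gt (show T1 < T2 from h12) : ¬ T2 ≤ T1)
end Krull

section Assembly
open Topology

variable {K L : Type} [Field K] [LieRing L] [LieAlgebra K L]

lemma preirred_inter_open {X : Type} [TopologicalSpace X] {t O : Set X}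
    (ht : IsPreirreducible t) (hO : IsOpen O) : IsPreirreducible (t ∩ O) := by
  rintro u v hu hv ⟨a, ⟨hat, haO⟩, hau⟩ ⟨b, ⟨hbt, hbO⟩, hbv⟩
  obtain ⟨c, hct, hc⟩ := ht (O ∩ u) (O ∩ v) (hO.inter hu) (hO.inter hv)
    ⟨a, hat, haO, hau⟩ ⟨b, hbt, hbO, hbv⟩
  exact ⟨c, ⟨hct, hc.1.1⟩, hc.1.2, hc.2.2⟩

set_option maxHeartbeats 1000000 in
/-- The image of a preconnected set under a continuous family of independent pairs,
taking spans, is preconnected for the plane topology. -/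
lemma spanCurve_preconnected {α : Type} [tα : TopologicalSpace α] {S : Set α}
    (hS : IsPreconnected S) (m : α → L × L)
    (hm : Continuous[tα, zariskiTopology K (L × L)] m)
    (hind : ∀ a ∈ S, LinearIndependent K ![(m a).1, (m a).2]) :
    @IsPreconnected _ (planeTopology K L)
      ((fun a => Submodule.span K {(m a).1, (m a).2}) '' S) := by
  letI tLL := zariskiTopology K (L × L)
  letI tP := planeTopology K L
  apply hS.image
  rw [continuousOn_iff_continuous_restrict]
  have hg : Continuous (fun a : ↥S =>
      (⟨m a.val, hind a.val a.2⟩ : {q : L × L // LinearIndependent K ![q.1, q.2]})) :=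
    Continuous.subtype_mk (hm.comp continuous_subtype_val) _
  have hspan : Continuous[_, planeTopology K L]
      (fun q : {q : L × L // LinearIndependent K ![q.1, q.2]} =>
        Submodule.span K {q.val.1, q.val.2}) :=
    continuous_coinduced_rng
  exact hspan.comp hg

end Assembly

set_option maxHeartbeats 1000000 in
/-- Let `𝔲` be a finite-dimensional unipotent restricted Lie algebra over an
algebraically closed field of characteristic `p ≥ 3` whose nullcone `V(𝔲)` is irreducible of
dimension at least `2`.  Then the variety `E(2,𝔲)` of two-dimensional elementary abelian
`p`-subalgebras is non-empty and connected. -/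
theorem statement0 (p : ℕ) (K L : Type) [Field K] [IsAlgClosed K] [CharP K p]
    [Fact (Nat.Prime p)] (hp3 : 3 ≤ p) [LieRing L] [LieAlgebra K L] [Module.Finite K L]
    [PStructure p K L] (hu : IsUnipotent p K L)
    (hirr : @IsIrreducible L (zariskiTopology K L) (nullcone p K L))
    (hdim : 2 ≤ @topologicalKrullDim ↥(nullcone p K L)
      (TopologicalSpace.induced Subtype.val (zariskiTopology K L))) :
    (E2 p K L).Nonempty ∧ @IsPreconnected _ (planeTopology K L) (E2 p K L) := by
  classical
  have hprime : Nat.Prime p := Fact.out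
  have hp : p ≠ 0 := hprime.ne_zero
  have hp2 : 2 ≤ p := hprime.two_le
  letI tL := zariskiTopology K L
  letI tLL := zariskiTopology K (L × L)
  letI tK := zariskiTopology K K
  letI tP := planeTopology K L
  -- From the dimension hypothesis, the nullcone is not contained in any line
  have hline : ∀ z : L, ∃ x ∈ nullcone p K L, x ∉ Set.range (· • z : K → L) := by
    intro z
    by_contra hcon
    push_neg at hcon
    exact not_two_le_krull_of_subset_line (K := K) z hcon hdim
  -- L is nontrivial
  obtain ⟨x₀, hx₀null, hx₀r⟩ := hline 0
  haveI : Nontrivial L := ⟨x₀, 0, fun h => hx₀r ⟨0, by rw [h]; simp⟩⟩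
  -- a nonzero central element killed by the p-map
  obtain ⟨z, hz0, hzc, hzp⟩ := exists_central_pnil hp hu
  have hzc' : ∀ w : L, ⁅w, z⁆ = 0 := hzc
  -- the base preconnected family: planes through z spanned by nullcone elements
  set S : Set L := nullcone p K L ∩ (↑(Submodule.span K {z}))ᶜ with hSdef
  have hS_mem : ∀ x ∈ S, pmap p K L x = 0 ∧ x ∉ Submodule.span K {z} := by
    rintro x ⟨h1, h2⟩
    exact ⟨h1, h2⟩
  have hS_indep : ∀ x ∈ S, LinearIndependent K ![x, z] := by
    intro x hx
    refine linearIndependent_fin2.mpr ⟨by simpa using hz0, fun a hax => ?_⟩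
    simp only [Matrix.cons_val_one, Matrix.head_cons, Matrix.cons_val_zero] at hax
    exact (hS_mem x hx).2 (Submodule.mem_span_singleton.mpr ⟨a, hax⟩)
  have hS_preconn : IsPreconnected S := by
    apply IsPreirreducible.isPreconnected
    apply preirred_inter_open hirr.2
    rw [isOpen_compl_iff]
    exact zar_isClosed (isZariskiClosed_submodule (Submodule.span K {z}))
  -- continuity of x ↦ (x, z)
  have hmA : Continuous[tL, tLL] (fun x : L => (x, z)) := by
    have h := zar_continuous_affine (K := K)
      (LinearMap.prod (LinearMap.id : L →ₗ[K] L) 0) ((0 : L), z)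
    have heq : (fun v : L =>
        (LinearMap.prod (LinearMap.id : L →ₗ[K] L) (0 : L →ₗ[K] L)) v + ((0 : L), z))
        = fun x : L => (x, z) := by
      funext v
      simp [Prod.ext_iff]
    rwa [heq] at h
  set A : Set (Submodule K L) := (fun x : L => Submodule.span K {x, z}) '' S with hAdef
  have hA_preconn : @IsPreconnected _ (planeTopology K L) A := by
    have := spanCurve_preconnected (K := K) (L := L) hS_preconn (fun x : L => (x, z)) hmA
      (fun x hx => hS_indep x hx)
    exact this
  have hA_sub : A ⊆ E2 p K L := by
    rintro _ ⟨x, hxS, rfl⟩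
    exact span_pair_mem_E2 hp2 (hzc' x) (hS_mem x hxS).1 hzp (hS_indep x hxS)
  -- A is nonempty
  obtain ⟨x₁, hx₁null, hx₁r⟩ := hline z
  have hx₁S : x₁ ∈ S := by
    refine ⟨hx₁null, fun hmem => ?_⟩
    obtain ⟨a, ha⟩ := Submodule.mem_span_singleton.mp hmem
    exact hx₁r ⟨a, ha⟩
  have hA_ne : A.Nonempty := ⟨_, ⟨x₁, hx₁S, rfl⟩⟩
  obtain ⟨a₀, ha₀⟩ := hA_ne
  -- the key step: every plane of E2 lies in a preconnected subset of E2 containing A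
  have key : ∀ e ∈ E2 p K L, ∃ C : Set (Submodule K L),
      (@IsPreconnected _ (planeTopology K L) C) ∧ C ⊆ E2 p K L ∧ e ∈ C ∧ A ⊆ C := by
    intro e he
    obtain ⟨hrank, habel, hnull⟩ := he
    by_cases hze : z ∈ e
    · -- planes containing z already belong to A
      have hnle : ¬ (e ≤ Submodule.span K {z}) := by
        intro hle
        have h1 : Module.finrank K ↥e ≤ Module.finrank K ↥(Submodule.span K {z}) :=
          Submodule.finrank_mono hle
        rw [hrank, finrank_span_singleton hz0] at h1
        omega
      obtain ⟨x, hxe, hxz⟩ := SetLike.not_le_iff_exists.mp hnle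
      have hxz_li : LinearIndependent K ![x, z] :=
        linearIndependent_fin2.mpr ⟨by simpa using hz0, fun a hax => by
          simp only [Matrix.cons_val_one, Matrix.head_cons, Matrix.cons_val_zero] at hax
          exact hxz (Submodule.mem_span_singleton.mpr ⟨a, hax⟩)⟩
      have hespan : Submodule.span K {x, z} = e := by
        apply Submodule.eq_of_le_of_finrank_le
        · rw [Submodule.span_le]
          rintro v (rfl | hv)
          · exact hxe
          · exact (Set.mem_singleton_iff.mp hv) ▸ hze
        · rw [hrank]
          have h2 := finrank_span_eq_card hxz_li
          rw [range_fin2] at h2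
          simp only [Fintype.card_fin] at h2
          rw [h2]
      refine ⟨A, hA_preconn, hA_sub, ⟨x, ⟨hnull x hxe, hxz⟩, hespan⟩, subset_rfl⟩
    · -- z outside e : connect e to A through two Zariski lines of planes
      -- first pick a basis x, y of e
      obtain ⟨u, hue, hu0⟩ := Submodule.exists_mem_ne_zero_of_ne_bot (p := e)
        (fun hbot => by rw [hbot] at hrank; simp at hrank)
      have hnle : ¬ (e ≤ Submodule.span K {u}) := by
        intro hle
        have h1 : Module.finrank K ↥e ≤ Module.finrank K ↥(Submodule.span K {u}) :=
          Submodule.finrank_mono hle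
        rw [hrank, finrank_span_singleton hu0] at h1
        omega
      obtain ⟨v, hve, hvu⟩ := SetLike.not_le_iff_exists.mp hnle
      set x := v with hxdef
      set y := u with hydef
      have hxy_li : LinearIndependent K ![x, y] :=
        linearIndependent_fin2.mpr ⟨by simpa using hu0, fun a hax => by
          simp only [Matrix.cons_val_one, Matrix.head_cons, Matrix.cons_val_zero] at hax
          exact hvu (Submodule.mem_span_singleton.mpr ⟨a, hax⟩)⟩
      have hxe : x ∈ e := hve
      have hye : y ∈ e := hue
      have hx0 : x ≠ 0 := hxy_li.ne_zero 0 ∘ fun h => by simpa [h] using h ▸ rfl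
      have hx0' : x ≠ 0 := by
        intro h
        exact (hxy_li.ne_zero 0) (by simp [h])
      have hy0 : y ≠ 0 := hu0
      have hay : ∀ a : K, a • y ≠ x := fun a hax => by
        have := (linearIndependent_fin2.mp hxy_li).2 a
        simp only [Matrix.cons_val_one, Matrix.head_cons, Matrix.cons_val_zero] at this
        exact this hax
      have hespan : e = Submodule.span K {x, y} := by
        symm
        apply Submodule.eq_of_le_of_finrank_le
        · rw [Submodule.span_le]
          rintro w (rfl | hw)
          · exact hxe
          · exact (Set.mem_singleton_iff.mp hw) ▸ hye
        · rw [hrank]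
          have h2 := finrank_span_eq_card hxy_li
          rw [range_fin2] at h2
          simp only [Fintype.card_fin] at h2
          rw [h2]
      -- basic facts
      have hxnull : pmap p K L x = 0 := hnull x hxe
      have hynull : pmap p K L y = 0 := hnull y hye
      have hbr : ⁅x, y⁆ = 0 := habel x hxe y hye
      -- membership of scalar multiples of z in e forces z ∈ e
      have hsz : ∀ a : K, a ≠ 0 → a • z ∉ e := by
        intro a ha hmem
        exact hze (by
          have := e.smul_mem a⁻¹ hmem
          rwa [smul_smul, inv_mul_cancel₀ ha, one_smul] at this)
      -- the universal preconnected parameter space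
      have hK_preconn : IsPreconnected (Set.univ : Set K) :=
        IsPreirreducible.isPreconnected (zar_preirreducible_univ)
      -- line 1 : t ↦ span {x, t•y + z}
      have hm1 : Continuous[tK, tLL] (fun t : K => ((x, t • y + z) : L × L)) := by
        have h := zar_continuous_affine (K := K)
          (LinearMap.prod (0 : K →ₗ[K] L) (LinearMap.toSpanSingleton K L y)) ((x : L), z)
        have heq : (fun t : K =>
            (LinearMap.prod (0 : K →ₗ[K] L) (LinearMap.toSpanSingleton K L y)) t + ((x : L), z))
            = fun t : K => ((x, t • y + z) : L × L) := by
          funext t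
          simp [Prod.ext_iff, LinearMap.toSpanSingleton_apply]
        rwa [heq] at h
      have h1ind : ∀ t : K, LinearIndependent K ![x, t • y + z] := by
        intro t
        refine linearIndependent_fin2.mpr ⟨?_, ?_⟩
        · simp only [Matrix.cons_val_one, Matrix.head_cons, Matrix.cons_val_zero, ne_eq]
          intro h0
          have : z = -(t • y) := by linear_combination (norm := abel) h0
          exact hze (this ▸ e.neg_mem (e.smul_mem t hye))
        · intro a hax
          simp only [Matrix.cons_val_one, Matrix.head_cons, Matrix.cons_val_zero] at hax
          rw [smul_add, smul_smul] at hax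
          by_cases ha : a = 0
          · rw [ha] at hax
            simp at hax
            exact hx0' hax.symm
          · have : a • z = x - (a * t) • y := by linear_combination (norm := abel) hax
            exact hsz a ha (this ▸ e.sub_mem hxe (e.smul_mem _ hye))
      have h1sub : (fun t : K => Submodule.span K {x, t • y + z}) '' Set.univ ⊆ E2 p K L := by
        rintro _ ⟨t, -, rfl⟩
        refine span_pair_mem_E2 hp2 ?_ hxnull ?_ (h1ind t)
        · rw [lie_add, lie_smul, hbr, hzc' x]
          simp
        · have hcomm : ⁅t • y, z⁆ = 0 := by rw [smul_lie, hzc' y, smul_zero]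
          rw [pmap_add_of_commute hp2 hcomm, pmap_smul, hynull, hzp, smul_zero, add_zero]
      have h1pre : @IsPreconnected _ (planeTopology K L)
          ((fun t : K => Submodule.span K {x, t • y + z}) '' Set.univ) := by
        have := spanCurve_preconnected (K := K) (L := L) hK_preconn
          (fun t : K => ((x, t • y + z) : L × L)) hm1 (fun t _ => h1ind t)
        exact this
      -- line 2 : t ↦ span {x, y + t•z}
      have hm2 : Continuous[tK, tLL] (fun t : K => ((x, y + t • z) : L × L)) := by
        have h := zar_continuous_affine (K := K)
          (LinearMap.prod (0 : K →ₗ[K] L) (LinearMap.toSpanSingleton K L z)) ((x : L), y)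
        have heq : (fun t : K =>
            (LinearMap.prod (0 : K →ₗ[K] L) (LinearMap.toSpanSingleton K L z)) t + ((x : L), y))
            = fun t : K => ((x, y + t • z) : L × L) := by
          funext t
          simp [Prod.ext_iff, LinearMap.toSpanSingleton_apply, add_comm]
        rwa [heq] at h
      have h2ind : ∀ t : K, LinearIndependent K ![x, y + t • z] := by
        intro t
        refine linearIndependent_fin2.mpr ⟨?_, ?_⟩
        · simp only [Matrix.cons_val_one, Matrix.head_cons, Matrix.cons_val_zero, ne_eq]
          intro h0
          by_cases ht : t = 0
          · rw [ht] at h0; simp at h0; exact hy0 h0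
          · have : t • z = -y := by linear_combination (norm := abel) h0
            exact hsz t ht (this ▸ e.neg_mem hye)
        · intro a hax
          simp only [Matrix.cons_val_one, Matrix.head_cons, Matrix.cons_val_zero] at hax
          rw [smul_add, smul_smul] at hax
          by_cases hat : a * t = 0
          · rw [hat] at hax
            simp only [zero_smul, add_zero] at hax
            exact hay a hax
          · have : (a * t) • z = x - a • y := by linear_combination (norm := abel) hax
            exact hsz _ hat (this ▸ e.sub_mem hxe (e.smul_mem _ hye))
      have h2sub : (fun t : K => Submodule.span K {x, y + t • z}) '' Set.univ ⊆ E2 p K L := by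
        rintro _ ⟨t, -, rfl⟩
        refine span_pair_mem_E2 hp2 ?_ hxnull ?_ (h2ind t)
        · rw [lie_add, lie_smul, hbr, hzc' x]
          simp
        · have hcomm : ⁅y, t • z⁆ = 0 := by rw [lie_smul, hzc' y, smul_zero]
          rw [pmap_add_of_commute hp2 hcomm, pmap_smul, hynull, hzp, smul_zero, add_zero]
      have h2pre : @IsPreconnected _ (planeTopology K L)
          ((fun t : K => Submodule.span K {x, y + t • z}) '' Set.univ) := by
        have := spanCurve_preconnected (K := K) (L := L) hK_preconn
          (fun t : K => ((x, y + t • z) : L × L)) hm2 (fun t _ => h2ind t)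
        exact this
      -- the two lines meet at span {x, y + z}
      have hmeet : Submodule.span K {x, (1 : K) • y + z} = Submodule.span K {x, y + (1 : K) • z} := by
        rw [one_smul, one_smul]
      -- line 1 meets A at span {x, z}
      have hxS : x ∈ S := by
        refine ⟨hxnull, fun hmem => ?_⟩
        obtain ⟨a, ha⟩ := Submodule.mem_span_singleton.mp hmem
        by_cases ha0 : a = 0
        · rw [ha0, zero_smul] at ha
          exact hx0' ha.symm
        · exact hze (by
            have : z = a⁻¹ • x := by rw [← ha, smul_smul, inv_mul_cancel₀ ha0, one_smul]
            exact this ▸ e.smul_mem a⁻¹ hxe)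
      have hanchor : Submodule.span K {x, z} ∈ A := ⟨x, hxS, rfl⟩
      have hanchor1 : Submodule.span K {x, z}
          ∈ (fun t : K => Submodule.span K {x, t • y + z}) '' Set.univ := by
        refine ⟨0, Set.mem_univ _, ?_⟩
        show Submodule.span K {x, (0 : K) • y + z} = _
        rw [zero_smul, zero_add]
      -- e itself lies on line 2 at t = 0
      have he2 : e ∈ (fun t : K => Submodule.span K {x, y + t • z}) '' Set.univ := by
        refine ⟨0, Set.mem_univ _, ?_⟩
        show Submodule.span K {x, y + (0 : K) • z} = e
        rw [zero_smul, add_zero, ← hespan]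
      -- assemble
      set U1 := (fun t : K => Submodule.span K {x, t • y + z}) '' Set.univ with hU1
      set U2 := (fun t : K => Submodule.span K {x, y + t • z}) '' Set.univ with hU2
      have hU12 : @IsPreconnected _ (planeTopology K L) (U1 ∪ U2) := by
        refine IsPreconnected.union (Submodule.span K {x, (1 : K) • y + z}) ?_ ?_ h1pre h2pre
        · exact ⟨1, Set.mem_univ _, rfl⟩
        · rw [hmeet]
          exact ⟨1, Set.mem_univ _, rfl⟩
      refine ⟨A ∪ (U1 ∪ U2), ?_, ?_, ?_, Set.subset_union_left⟩
      · refine IsPreconnected.union (Submodule.span K {x, z}) hanchor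
          (Or.inl hanchor1) hA_preconn hU12
      · rintro w (hw | hw | hw)
        · exact hA_sub hw
        · exact h1sub hw
        · exact h2sub hw
      · exact Or.inr (Or.inr he2)
  -- conclusion
  constructor
  · exact ⟨a₀, hA_sub ha₀⟩
  · have hcover : E2 p K L =
        ⋃₀ {C : Set (Submodule K L) |
          (@IsPreconnected _ (planeTopology K L) C) ∧ C ⊆ E2 p K L ∧ A ⊆ C} := by
      apply Set.Subset.antisymm
      · intro e he
        obtain ⟨C, hC1, hC2, hC3, hC4⟩ := key e he
        exact ⟨C, ⟨hC1, hC2, hC4⟩, hC3⟩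
      · rintro w ⟨C, ⟨-, hC2, -⟩, hw⟩
        exact hC2 hw
    rw [hcover]
    exact isPreconnected_sUnion a₀ _ (fun C hC => hC.2.2 ha₀) (fun C hC => hC.1)

end Paper
end

section
/- Let $p=3$ and let $Y = \{(\alpha,\beta,\gamma) \in \mathbb{A}^3 : \alpha^2\beta - \omega_0\alpha\beta^2 + \gamma^3 = 0\}$ for a fixed scalar $\omega_0$ in an algebraically closed field of characteristic $3$. Then $Y$ is an irreducible conical closed subvariety of $\mathbb{A}^3$ of dimension $2$. -/
open scoped TensorProduct

attribute [local instance 100] LieRing.ofAssociativeRing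

open scoped Topology

namespace Paper

section ZarGen

variable (K V : Type) [Field K] [AddCommGroup V] [Module K V]

lemma zc_univ : IsZariskiClosed K V Set.univ :=
  ⟨∅, Set.empty_subset _, by simp⟩

lemma zc_empty : IsZariskiClosed K V (∅ : Set V) := by
  refine ⟨{(1 : V → K)}, ?_, ?_⟩
  · simpa using (polyFunctions K V).one_mem
  · ext v
    simp

lemma zc_sInter {C : Set (Set V)} (h : ∀ s ∈ C, IsZariskiClosed K V s) :
    IsZariskiClosed K V (⋂₀ C) := by
  choose F hF1 hF2 using h
  refine ⟨⋃ (s : Set V) (hs : s ∈ C), F s hs, ?_, ?_⟩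
  · simp only [Set.iUnion_subset_iff]
    exact fun s hs => hF1 s hs
  · ext v
    simp only [Set.mem_sInter, Set.mem_setOf_eq, Set.mem_iUnion]
    constructor
    · rintro hv f ⟨s, hs, hfs⟩
      have := hv s hs
      rw [hF2 s hs] at this
      exact this f hfs
    · intro hv s hs
      rw [hF2 s hs]
      exact fun f hf => hv f ⟨s, hs, hf⟩

lemma zc_union {s t : Set V} (hs : IsZariskiClosed K V s) (ht : IsZariskiClosed K V t) :
    IsZariskiClosed K V (s ∪ t) := by
  obtain ⟨S, hS, rfl⟩ := hs
  obtain ⟨T, hT, rfl⟩ := ht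
  refine ⟨Set.image2 (· * ·) S T, ?_, ?_⟩
  · rintro _ ⟨f, hf, g, hg, rfl⟩
    exact mul_mem (hS hf) (hT hg)
  · ext v
    simp only [Set.mem_union, Set.mem_setOf_eq]
    constructor
    · rintro (h | h) _ ⟨f, hf, g, hg, rfl⟩
      · show f v * g v = 0
        rw [h f hf, zero_mul]
      · show f v * g v = 0
        rw [h g hg, mul_zero]
    · intro h
      by_cases hA : ∀ f ∈ S, f v = 0
      · exact Or.inl hA
      · push_neg at hA
        obtain ⟨f, hf, hf0⟩ := hA
        refine Or.inr fun g hg => ?_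
        have h2 : f v * g v = 0 := h _ (Set.mem_image2_of_mem hf hg)
        rcases mul_eq_zero.mp h2 with h' | h'
        · exact absurd h' hf0
        · exact h'

lemma isClosed_zar_iff {s : Set V} :
    IsClosed[zariskiTopology K V] s ↔ IsZariskiClosed K V s := by
  constructor
  · intro h
    have h' : TopologicalSpace.GenerateOpen {u : Set V | IsZariskiClosed K V uᶜ} sᶜ :=
      h.isOpen_compl
    have key : ∀ u : Set V,
        TopologicalSpace.GenerateOpen {u : Set V | IsZariskiClosed K V uᶜ} u →
        IsZariskiClosed K V uᶜ := by
      intro u hu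
      induction hu with
      | basic u hu => exact hu
      | univ => simpa using zc_empty K V
      | inter u v _ _ ihu ihv => rw [Set.compl_inter]; exact zc_union K V ihu ihv
      | sUnion S _ ih =>
        rw [Set.compl_sUnion]
        exact zc_sInter K V (by rintro t ⟨u, hu, rfl⟩; exact ih u hu)
    have := key _ h'
    rwa [compl_compl] at this
  · intro h
    have ho : IsOpen[zariskiTopology K V] sᶜ :=
      TopologicalSpace.isOpen_generateFrom_of_mem (by rwa [Set.mem_setOf_eq, compl_compl])
    exact @IsClosed.mk V (zariskiTopology K V) s ho

lemma continuous_zar {W : Type} [AddCommGroup W] [Module K W] {σ : V → W}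
    (h : ∀ s : Set W, IsZariskiClosed K W s → IsZariskiClosed K V (σ ⁻¹' s)) :
    Continuous[zariskiTopology K V, zariskiTopology K W] σ := by
  refine continuous_generateFrom_iff.mpr ?_
  intro u hu
  have h1 : IsZariskiClosed K V (σ ⁻¹' uᶜ) := h _ hu
  have h2 : IsClosed[zariskiTopology K V] (σ ⁻¹' uᶜ) := (isClosed_zar_iff K V).2 h1
  have h3 : IsOpen[zariskiTopology K V] (σ ⁻¹' uᶜ)ᶜ := h2.isOpen_compl
  simpa [Set.preimage_compl, compl_compl] using h3

end ZarGen

section A2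

open Polynomial

variable (K : Type) [Field K]

/-- Evaluation of an element of `K[x][y]` at a point of `𝔸²`. -/
noncomputable def ev2 (v : Fin 2 → K) : Polynomial (Polynomial K) →+* K :=
  eval₂RingHom (evalRingHom (v 0)) (v 1)

lemma ev2_C (v : Fin 2 → K) (p : Polynomial K) : ev2 K v (C p) = p.eval (v 0) := by
  simp [ev2]

lemma ev2_X (v : Fin 2 → K) : ev2 K v X = v 1 := by
  simp [ev2]

lemma ev2_CC (v : Fin 2 → K) (a : K) : ev2 K v (C (C a)) = a := by
  simp [ev2]

/-- Evaluation as an algebra homomorphism into the algebra of functions. -/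
noncomputable def E2map : Polynomial (Polynomial K) →ₐ[K] ((Fin 2 → K) → K) :=
  { Pi.ringHom (fun v => ev2 K v) with
    commutes' := fun a => by
      funext v
      show ev2 K v (algebraMap K _ a) = _
      rw [Polynomial.algebraMap_apply, Polynomial.algebraMap_apply]
      simp [ev2_CC] }

lemma E2map_apply (P : Polynomial (Polynomial K)) (v : Fin 2 → K) :
    E2map K P v = ev2 K v P := rfl

lemma adjoin_X_CX :
    Algebra.adjoin K ({X, C X} : Set (Polynomial (Polynomial K))) = ⊤ := by
  rw [eq_top_iff]
  rintro P -
  induction P using Polynomial.induction_on with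
  | C p =>
    induction p using Polynomial.induction_on with
    | C a =>
      have h : (C (C a) : Polynomial (Polynomial K)) = algebraMap K _ a := by
        rw [Polynomial.algebraMap_apply, Polynomial.algebraMap_apply]
        simp
      rw [h]
      exact Subalgebra.algebraMap_mem _ a
    | add p q hp hq =>
      rw [map_add]
      exact add_mem hp hq
    | monomial n a ih =>
      rw [pow_succ, ← mul_assoc, map_mul]
      exact mul_mem ih (Algebra.subset_adjoin (by simp))
  | add p q hp hq => exact add_mem hp hq
  | monomial n a ih =>
    rw [pow_succ, ← mul_assoc]
    exact mul_mem ih (Algebra.subset_adjoin (by simp))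

lemma coord_mem (i : Fin 2) : (fun v : Fin 2 → K => v i) ∈ polyFunctions K (Fin 2 → K) :=
  Algebra.subset_adjoin ⟨LinearMap.proj i, rfl⟩

lemma polyFunctions_eq_range : polyFunctions K (Fin 2 → K) = (E2map K).range := by
  apply le_antisymm
  · apply Algebra.adjoin_le
    rintro _ ⟨φ, rfl⟩
    refine ⟨C (C (φ (fun j => if (0 : Fin 2) = j then 1 else 0))) * C X +
      C (C (φ (fun j => if (1 : Fin 2) = j then 1 else 0))) * X, ?_⟩
    funext v
    show ev2 K v _ = φ v
    rw [LinearMap.pi_apply_eq_sum_univ φ v, Fin.sum_univ_two]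
    rw [map_add, map_mul, map_mul, ev2_CC, ev2_CC, ev2_C, ev2_X, eval_X]
    simp [smul_eq_mul, mul_comm]
  · rw [← Algebra.map_top, ← adjoin_X_CX K, AlgHom.map_adjoin]
    apply Algebra.adjoin_le
    rintro _ ⟨P, hP, rfl⟩
    rcases hP with rfl | rfl
    · have h : E2map K X = fun v : Fin 2 → K => v 1 := by
        funext v; rw [E2map_apply, ev2_X]
      rw [h]
      exact coord_mem K 1
    · have h : E2map K (C X) = fun v : Fin 2 → K => v 0 := by
        funext v; rw [E2map_apply, ev2_C, eval_X]
      rw [h]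
      exact coord_mem K 0

/-- The zero locus of a set of polynomials in `𝔸²`. -/
def zset (S : Set (Polynomial (Polynomial K))) : Set (Fin 2 → K) :=
  {v | ∀ P ∈ S, ev2 K v P = 0}

/-- The vanishing ideal of a subset of `𝔸²`. -/
noncomputable def vI (t : Set (Fin 2 → K)) : Ideal (Polynomial (Polynomial K)) where
  carrier := {P | ∀ v ∈ t, ev2 K v P = 0}
  add_mem' := fun ha hb v hv => by
    rw [map_add, ha v hv, hb v hv, add_zero]
  zero_mem' := fun v hv => map_zero _
  smul_mem' := fun c x hx v hv => by
    rw [smul_eq_mul, map_mul, hx v hv, mul_zero]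

lemma mem_vI {t : Set (Fin 2 → K)} {P : Polynomial (Polynomial K)} :
    P ∈ vI K t ↔ ∀ v ∈ t, ev2 K v P = 0 := Iff.rfl

lemma isClosed_iff_zset {t : Set (Fin 2 → K)} :
    IsClosed[zariskiTopology K (Fin 2 → K)] t ↔ ∃ S, t = zset K S := by
  rw [isClosed_zar_iff]
  constructor
  · rintro ⟨S, hS, rfl⟩
    refine ⟨{P | E2map K P ∈ S}, ?_⟩
    ext v
    constructor
    · intro hv P hP
      exact hv _ hP
    · intro hv f hf
      have hf' : f ∈ (E2map K).range := by
        rw [← polyFunctions_eq_range]; exact hS hf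
      obtain ⟨P, rfl⟩ := hf'
      exact hv P hf
  · rintro ⟨S, rfl⟩
    refine ⟨E2map K '' S, ?_, ?_⟩
    · rintro _ ⟨P, hP, rfl⟩
      rw [polyFunctions_eq_range]
      exact ⟨P, rfl⟩
    · ext v
      simp only [zset, Set.mem_setOf_eq, Set.forall_mem_image]
      rfl

lemma zset_vI_of_closed {t : Set (Fin 2 → K)}
    (ht : IsClosed[zariskiTopology K (Fin 2 → K)] t) : zset K (vI K t : Set _) = t := by
  obtain ⟨S, rfl⟩ := (isClosed_iff_zset K).mp ht
  ext v
  constructor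
  · intro hv P hP
    exact hv P (fun w hw => hw P hP)
  · intro hv P hP
    exact hP v hv

lemma zc_zset (S : Set (Polynomial (Polynomial K))) :
    IsClosed[zariskiTopology K (Fin 2 → K)] (zset K S) :=
  (isClosed_iff_zset K).mpr ⟨S, rfl⟩

lemma E2map_injective [Infinite K] : Function.Injective (E2map K) := by
  rw [injective_iff_map_eq_zero]
  intro P hP
  have h : ∀ a b : K, ev2 K ![a, b] P = 0 := by
    intro a b
    have := congrFun hP ![a, b]
    simpa [E2map_apply] using this
  have h1 : ∀ a : K, P.map (evalRingHom a) = 0 := by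
    intro a
    apply Polynomial.funext
    intro b
    rw [eval_map, eval_zero]
    have := h a b
    simpa [ev2, Matrix.cons_val_zero, Matrix.cons_val_one, Matrix.head_cons] using this
  have h2 : ∀ n, P.coeff n = 0 := by
    intro n
    apply Polynomial.funext
    intro a
    have := congrArg (fun Q => Q.coeff n) (h1 a)
    simpa [coeff_map] using this
  exact Polynomial.ext fun n => by rw [h2 n, coeff_zero]

lemma vI_univ [Infinite K] : vI K (Set.univ : Set (Fin 2 → K)) = ⊥ := by
  ext P
  rw [mem_vI, Ideal.mem_bot]
  constructor
  · intro h
    apply E2map_injective K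
    rw [map_zero]
    funext v
    exact h v (Set.mem_univ v)
  · rintro rfl
    intro v _
    exact map_zero _

lemma vI_isPrime [Infinite K] {t : Set (Fin 2 → K)} (hne : t.Nonempty)
    (hirr : @IsPreirreducible _ (zariskiTopology K (Fin 2 → K)) t) : (vI K t).IsPrime := by
  constructor
  · rw [Ideal.ne_top_iff_one]
    intro h1
    obtain ⟨v, hv⟩ := hne
    simpa using h1 v hv
  · intro P Q hPQ
    by_contra hc
    push_neg at hc
    obtain ⟨hP, hQ⟩ := hc
    rw [mem_vI] at hP hQ
    push_neg at hP hQ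
    obtain ⟨a, ha, ha0⟩ := hP
    obtain ⟨b, hb, hb0⟩ := hQ
    have hsub : t ⊆ zset K {P} ∪ zset K {Q} := by
      intro v hv
      have := hPQ v hv
      rw [map_mul] at this
      rcases mul_eq_zero.mp this with h' | h'
      · exact Or.inl (fun R hR => by rw [Set.mem_singleton_iff] at hR; rw [hR]; exact h')
      · exact Or.inr (fun R hR => by rw [Set.mem_singleton_iff] at hR; rw [hR]; exact h')
    have := (@isPreirreducible_iff_isClosed_union_isClosed _ (zariskiTopology K (Fin 2 → K)) t).mp
      hirr (zset K {P}) (zset K {Q}) (zc_zset K _) (zc_zset K _) hsub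
    rcases this with h' | h'
    · exact ha0 (h' ha P (Set.mem_singleton P))
    · exact hb0 (h' hb Q (Set.mem_singleton Q))

lemma irred_of_vI_prime {t : Set (Fin 2 → K)}
    (hpr : (vI K t).IsPrime) : @IsIrreducible _ (zariskiTopology K (Fin 2 → K)) t := by
  constructor
  · by_contra hne
    rw [Set.not_nonempty_iff_eq_empty] at hne
    apply hpr.ne_top
    rw [Ideal.eq_top_iff_one, mem_vI]
    intro v hv
    rw [hne] at hv
    exact absurd hv (Set.notMem_empty v)
  · rw [@isPreirreducible_iff_isClosed_union_isClosed _ (zariskiTopology K (Fin 2 → K)) t]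
    intro z1 z2 h1 h2 hsub
    obtain ⟨S1, rfl⟩ := (isClosed_iff_zset K).mp h1
    obtain ⟨S2, rfl⟩ := (isClosed_iff_zset K).mp h2
    by_contra hc
    push_neg at hc
    obtain ⟨hc1, hc2⟩ := hc
    obtain ⟨a, ha, ha1⟩ := Set.not_subset.mp hc1
    obtain ⟨b, hb, hb2⟩ := Set.not_subset.mp hc2
    simp only [zset, Set.mem_setOf_eq, not_forall] at ha1 hb2
    obtain ⟨P, hP, hP0⟩ := ha1
    obtain ⟨Q, hQ, hQ0⟩ := hb2
    have hPQ : P * Q ∈ vI K t := by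
      rw [mem_vI]
      intro v hv
      rw [map_mul]
      rcases hsub hv with h' | h'
      · rw [h' P hP, zero_mul]
      · rw [h' Q hQ, mul_zero]
    rcases hpr.mem_or_mem hPQ with h' | h'
    · exact hP0 (h' a ha)
    · exact hQ0 (h' b hb)

lemma zc_singleton (v0 : Fin 2 → K) :
    IsClosed[zariskiTopology K (Fin 2 → K)] {v0} := by
  refine (isClosed_iff_zset K).mpr ⟨{X - C (C (v0 1)), C (X - C (v0 0))}, ?_⟩
  ext v
  simp only [Set.mem_singleton_iff, zset, Set.mem_setOf_eq, Set.mem_insert_iff]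
  constructor
  · rintro rfl P hP
    rcases hP with rfl | hP
    · rw [map_sub, ev2_X, ev2_CC, sub_self]
    · rw [hP, ev2_C, eval_sub, eval_X, eval_C, sub_self]
  · intro h
    have h1 := h _ (Or.inl rfl)
    have h2 := h _ (Or.inr rfl)
    rw [map_sub, ev2_X, ev2_CC, sub_eq_zero] at h1
    rw [ev2_C, eval_sub, eval_X, eval_C, sub_eq_zero] at h2
    funext i
    fin_cases i
    · exact h2
    · exact h1

lemma zc_finite {t : Set (Fin 2 → K)} (ht : t.Finite) :
    IsClosed[zariskiTopology K (Fin 2 → K)] t := by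
  refine Set.Finite.induction_on (motive := fun s _ => IsClosed[zariskiTopology K (Fin 2 → K)] s)
    _ ht ?_ ?_
  · have : (∅ : Set (Fin 2 → K)) = zset K {1} := by
      ext v
      simp [zset]
    rw [this]
    exact zc_zset K _
  · intro a s _ _ ih
    have h : insert a s = {a} ∪ s := rfl
    rw [h]
    exact @IsClosed.union _ _ _ (zariskiTopology K (Fin 2 → K)) (zc_singleton K a) ih

/-- The swap of the two variables of `K[x][y]`. -/
noncomputable def swapHom : Polynomial (Polynomial K) →+* Polynomial (Polynomial K) :=
  eval₂RingHom (eval₂RingHom (C.comp C) X) (C X)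

lemma swapHom_X : swapHom K X = C X := by
  simp [swapHom]

lemma swapHom_CX : swapHom K (C X) = X := by
  simp [swapHom]

lemma swapHom_CC (a : K) : swapHom K (C (C a)) = C (C a) := by
  simp [swapHom]

lemma swapHom_invol : (swapHom K).comp (swapHom K) = RingHom.id _ := by
  have hC : ∀ p : Polynomial K, swapHom K (swapHom K (C p)) = C p := by
    intro p
    induction p using Polynomial.induction_on with
    | C a => rw [swapHom_CC, swapHom_CC]
    | add p q hp hq => rw [map_add, map_add, map_add, hp, hq]
    | monomial n a ih =>
      rw [pow_succ, ← mul_assoc, map_mul, map_mul, map_mul, ih, swapHom_CX, swapHom_X]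
  apply Polynomial.ringHom_ext
  · intro p
    simpa using hC p
  · simp [swapHom_X, swapHom_CX]

lemma swapHom_swapHom (P : Polynomial (Polynomial K)) : swapHom K (swapHom K P) = P :=
  RingHom.congr_fun (swapHom_invol K) P

/-- The swap as a ring isomorphism. -/
noncomputable def swapEquiv : Polynomial (Polynomial K) ≃+* Polynomial (Polynomial K) :=
  RingEquiv.ofRingHom (swapHom K) (swapHom K) (swapHom_invol K) (swapHom_invol K)

lemma ev2_swapHom (v : Fin 2 → K) (P : Polynomial (Polynomial K)) :
    ev2 K v (swapHom K P) = ev2 K ![v 1, v 0] P := by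
  have h : (ev2 K v).comp (swapHom K) = ev2 K ![v 1, v 0] := by
    apply Polynomial.ringHom_ext
    · intro p
      have h2 : ((ev2 K v).comp (swapHom K)).comp C = (ev2 K ![v 1, v 0]).comp C := by
        apply Polynomial.ringHom_ext
        · intro a
          show ev2 K v (swapHom K (C (C a))) = ev2 K ![v 1, v 0] (C (C a))
          rw [swapHom_CC, ev2_CC, ev2_CC]
        · show ev2 K v (swapHom K (C X)) = ev2 K ![v 1, v 0] (C X)
          rw [swapHom_CX, ev2_X, ev2_C, eval_X]
          simp
      exact RingHom.congr_fun h2 p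
    · show ev2 K v (swapHom K X) = ev2 K ![v 1, v 0] X
      rw [swapHom_X, ev2_C, eval_X, ev2_X]
      simp
  exact RingHom.congr_fun h P

lemma prime_swapHom {q : Polynomial (Polynomial K)} (hq : Prime q) :
    Prime (swapHom K q) := by
  have h : swapHom K q = swapEquiv K q := rfl
  rw [h]
  exact (MulEquiv.prime_iff (swapEquiv K)).mpr hq

lemma not_dvd_swapHom {q g : Polynomial (Polynomial K)} (h : ¬ q ∣ g) :
    ¬ swapHom K q ∣ swapHom K g := by
  intro hd
  apply h
  have := map_dvd (swapHom K) hd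
  rwa [swapHom_swapHom, swapHom_swapHom] at this

/-- Coprime polynomials have a nonzero "resultant": a nonzero constant (in `K[x]`)
in the ideal they span. -/
lemma exists_const_in_span {q g : Polynomial (Polynomial K)} (hq : Prime q) (hg : ¬ q ∣ g) :
    ∃ d : Polynomial K, d ≠ 0 ∧
      C d ∈ Ideal.span ({q, g} : Set (Polynomial (Polynomial K))) := by
  by_cases hdeg : q.natDegree = 0
  · obtain ⟨q0, rfl⟩ := Polynomial.natDegree_eq_zero.mp hdeg
    refine ⟨q0, fun h => hq.ne_zero (by rw [h, map_zero]), Ideal.subset_span (by simp)⟩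
  · have hg0 : g ≠ 0 := fun h => hg (h ▸ dvd_zero q)
    have hq0 : q ≠ 0 := hq.ne_zero
    letI : NormalizationMonoid (Polynomial K) :=
      UniqueFactorizationMonoid.normalizationMonoid.toNormalizationMonoid
    letI : NormalizedGCDMonoid (Polynomial K) :=
      UniqueFactorizationMonoid.toNormalizedGCDMonoid _
    have hq_prim : q.IsPrimitive := by
      intro r hr
      rcases eq_or_ne r 0 with rfl | hr0
      · rw [map_zero, zero_dvd_iff] at hr
        exact absurd hr hq0
      obtain ⟨t, ht⟩ := hr
      rcases hq.irreducible.isUnit_or_isUnit ht with h | h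
      · exact Polynomial.isUnit_C.mp h
      · exfalso
        obtain ⟨r', hr', hs'⟩ := Polynomial.isUnit_iff.mp h
        apply hdeg
        rw [ht, ← hs', ← C_mul, natDegree_C]
    have hmapq_irr : Irreducible (q.map (algebraMap (Polynomial K) (RatFunc K))) :=
      (hq_prim.irreducible_iff_irreducible_map_fraction_map (K := RatFunc K)).mp hq.irreducible
    have hnotdvd : ¬ q.map (algebraMap (Polynomial K) (RatFunc K)) ∣
        g.map (algebraMap (Polynomial K) (RatFunc K)) := by
      intro hdvd
      apply hg
      have hcontent : g.content ≠ 0 := fun h => hg0 (content_eq_zero_iff.mp h)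
      have hu : IsUnit (C (algebraMap (Polynomial K) (RatFunc K) g.content) :
          Polynomial (RatFunc K)) := by
        apply Polynomial.isUnit_C.mpr
        apply isUnit_iff_ne_zero.mpr
        intro h
        exact hcontent ((map_eq_zero_iff _ (IsFractionRing.injective _ _)).mp h)
      have hdvd' : q.map (algebraMap (Polynomial K) (RatFunc K)) ∣
          g.primPart.map (algebraMap (Polynomial K) (RatFunc K)) := by
        have hgf := g.eq_C_content_mul_primPart
        rw [hgf, Polynomial.map_mul, map_C] at hdvd
        exact (hu.dvd_mul_left).mp hdvd
      have := hq_prim.dvd_of_fraction_map_dvd_fraction_map (K := RatFunc K)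
        hdvd'
      exact this.trans g.primPart_dvd
    have hcop : IsCoprime (q.map (algebraMap (Polynomial K) (RatFunc K)))
        (g.map (algebraMap (Polynomial K) (RatFunc K))) :=
      (hmapq_irr.coprime_iff_not_dvd).mpr hnotdvd
    obtain ⟨a, b, hab⟩ := hcop
    obtain ⟨ca, hca⟩ :=
      IsLocalization.integerNormalization_map_to_map (nonZeroDivisors (Polynomial K)) a
    obtain ⟨cb, hcb⟩ :=
      IsLocalization.integerNormalization_map_to_map (nonZeroDivisors (Polynomial K)) b
    rw [Algebra.smul_def, Polynomial.algebraMap_apply] at hca hcb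
    set a' := IsLocalization.integerNormalization (nonZeroDivisors (Polynomial K)) a with ha'
    set b' := IsLocalization.integerNormalization (nonZeroDivisors (Polynomial K)) b with hb'
    refine ⟨(ca : Polynomial K) * (cb : Polynomial K),
      mul_ne_zero (nonZeroDivisors.coe_ne_zero ca) (nonZeroDivisors.coe_ne_zero cb), ?_⟩
    rw [Ideal.mem_span_pair]
    refine ⟨C (cb : Polynomial K) * a', C (ca : Polynomial K) * b', ?_⟩
    apply Polynomial.map_injective (algebraMap (Polynomial K) (RatFunc K))
      (IsFractionRing.injective _ _)
    rw [Polynomial.map_add, Polynomial.map_mul, Polynomial.map_mul, Polynomial.map_mul,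
      Polynomial.map_mul, map_C, map_C, map_C, hca, hcb, _root_.map_mul, C_mul]
    ring_nf
    linear_combination (C (algebraMap (Polynomial K) (RatFunc K) (ca : Polynomial K)) *
      C (algebraMap (Polynomial K) (RatFunc K) (cb : Polynomial K))) * hab

/-- A prime ideal of a UFD contains a prime element, if nonzero. -/
lemma exists_prime_mem {I : Ideal (Polynomial (Polynomial K))} (hI : I.IsPrime)
    (hbot : I ≠ ⊥) : ∃ q ∈ I, Prime q := by
  obtain ⟨f, hfI, hf0⟩ := Submodule.exists_mem_ne_zero_of_ne_bot hbot
  revert hfI hf0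
  induction f using WfDvdMonoid.induction_on_irreducible with
  | zero => intro _ h; exact absurd rfl h
  | unit u hu => intro huI _; exact absurd (I.eq_top_of_isUnit_mem huI hu) hI.ne_top
  | mul a i ha hi ih =>
    intro hmem _
    rcases hI.mem_or_mem hmem with h | h
    · exact ⟨i, h, hi.prime⟩
    · exact ih h ha

lemma finite_common_zeros_aux {q g : Polynomial (Polynomial K)} (hq : Prime q)
    (hg : ¬ q ∣ g) :
    ∃ A : Set K, A.Finite ∧
      ∀ v : Fin 2 → K, ev2 K v q = 0 → ev2 K v g = 0 → v 0 ∈ A := by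
  obtain ⟨d, hd0, hd⟩ := exists_const_in_span K hq hg
  obtain ⟨u, w, huw⟩ := Ideal.mem_span_pair.mp hd
  refine ⟨{x | d.IsRoot x}, Polynomial.finite_setOf_isRoot hd0, ?_⟩
  intro v hvq hvg
  have := congrArg (ev2 K v) huw
  rw [map_add, map_mul, map_mul, hvq, hvg, mul_zero, mul_zero, add_zero, ev2_C] at this
  exact this.symm

lemma finite_common_zeros {q g : Polynomial (Polynomial K)} (hq : Prime q) (hg : ¬ q ∣ g) :
    {v : Fin 2 → K | ev2 K v q = 0 ∧ ev2 K v g = 0}.Finite := by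
  obtain ⟨A, hA, hAmem⟩ := finite_common_zeros_aux K hq hg
  obtain ⟨B, hB, hBmem⟩ := finite_common_zeros_aux K (prime_swapHom K hq) (not_dvd_swapHom K hg)
  have hsub : {v : Fin 2 → K | ev2 K v q = 0 ∧ ev2 K v g = 0} ⊆
      (fun p : K × K => ![p.1, p.2]) '' (A ×ˢ B) := by
    rintro v ⟨hvq, hvg⟩
    have hvswap : (![v 1, v 0] : Fin 2 → K) 1 = v 0 := rfl
    have h1 : ev2 K ![v 1, v 0] (swapHom K q) = 0 := by
      rw [ev2_swapHom]
      have : (![(![v 1, v 0] : Fin 2 → K) 1, (![v 1, v 0] : Fin 2 → K) 0] : Fin 2 → K) = v := by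
        funext i; fin_cases i <;> rfl
      rw [this]
      exact hvq
    have h2 : ev2 K ![v 1, v 0] (swapHom K g) = 0 := by
      rw [ev2_swapHom]
      have : (![(![v 1, v 0] : Fin 2 → K) 1, (![v 1, v 0] : Fin 2 → K) 0] : Fin 2 → K) = v := by
        funext i; fin_cases i <;> rfl
      rw [this]
      exact hvg
    have hv1 : v 1 ∈ B := by
      have := hBmem ![v 1, v 0] h1 h2
      simpa using this
    refine ⟨(v 0, v 1), ⟨hAmem v hvq hvg, hv1⟩, ?_⟩
    funext i; fin_cases i <;> rfl
  exact ((hA.prod hB).image _).subset hsub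

lemma zc_line :
    IsClosed[zariskiTopology K (Fin 2 → K)] {v : Fin 2 → K | v 1 = 0} := by
  refine (isClosed_iff_zset K).mpr ⟨{X}, ?_⟩
  ext v
  simp [zset, ev2_X]

lemma vI_line [Infinite K] :
    vI K {v : Fin 2 → K | v 1 = 0} = Ideal.span {(X : Polynomial (Polynomial K))} := by
  apply le_antisymm
  · intro P hP
    rw [mem_vI] at hP
    have hc : P.coeff 0 = 0 := by
      apply Polynomial.funext
      intro a
      rw [eval_zero]
      have h := hP ![a, 0] (by simp)
      rw [← X_mul_divX_add P, map_add, map_mul, ev2_X, ev2_C] at h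
      simpa using h
    rw [Ideal.mem_span_singleton]
    have h2 := X_mul_divX_add P
    rw [hc, map_zero, add_zero] at h2
    exact ⟨P.divX, h2.symm⟩
  · rw [Ideal.span_le]
    rintro _ rfl
    rw [SetLike.mem_coe, mem_vI]
    intro v hv
    rw [ev2_X]
    exact hv

lemma line_irred [Infinite K] :
    @IsIrreducible _ (zariskiTopology K (Fin 2 → K)) {v : Fin 2 → K | v 1 = 0} := by
  apply irred_of_vI_prime
  rw [vI_line]
  exact (Ideal.span_singleton_prime X_ne_zero).mpr prime_X

lemma univ_irred [Infinite K] :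
    @IsIrreducible _ (zariskiTopology K (Fin 2 → K)) (Set.univ : Set (Fin 2 → K)) := by
  apply irred_of_vI_prime
  rw [vI_univ]
  exact Ideal.bot_prime

lemma dim_A2 [Infinite K] :
    @topologicalKrullDim (Fin 2 → K) (zariskiTopology K (Fin 2 → K)) = 2 := by
  letI : TopologicalSpace (Fin 2 → K) := zariskiTopology K (Fin 2 → K)
  have absurd_chain : ∀ T0 T1 T2 T3 : TopologicalSpace.IrreducibleCloseds (Fin 2 → K),
      T0 < T1 → T1 < T2 → T2 < T3 → False := by
    intro T0 T1 T2 T3 h01 h12 h23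
    obtain ⟨y3, hy3, hy3'⟩ := SetLike.exists_of_lt h23
    have hT2univ : (T2 : Set (Fin 2 → K)) ≠ Set.univ := by
      intro h
      apply hy3'
      rw [← SetLike.mem_coe, h]
      trivial
    have hP2prime : (vI K (T2 : Set (Fin 2 → K))).IsPrime :=
      vI_isPrime K T2.isIrreducible'.nonempty T2.isIrreducible'.isPreirreducible
    have hP2bot : vI K (T2 : Set (Fin 2 → K)) ≠ ⊥ := by
      intro h
      apply hT2univ
      have h1 := zset_vI_of_closed K (t := (T2 : Set (Fin 2 → K))) T2.isClosed'
      rw [h] at h1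
      rw [← h1]
      ext v
      simp only [zset, Set.mem_univ, iff_true, Set.mem_setOf_eq]
      intro P hP
      rw [SetLike.mem_coe, Ideal.mem_bot] at hP
      rw [hP, map_zero]
    obtain ⟨q, hqmem, hqprime⟩ := exists_prime_mem K hP2prime hP2bot
    have hlt : vI K (T2 : Set (Fin 2 → K)) < vI K (T1 : Set (Fin 2 → K)) := by
      rcases lt_iff_le_and_ne.mp h12 with ⟨hle, hne⟩
      rw [lt_iff_le_and_ne]
      constructor
      · intro P hP v hv
        exact hP v (hle hv)
      · intro h
        apply hne
        apply SetLike.coe_injective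
        rw [← zset_vI_of_closed K (t := (T1 : Set (Fin 2 → K))) T1.isClosed',
          ← zset_vI_of_closed K (t := (T2 : Set (Fin 2 → K))) T2.isClosed', h]
    obtain ⟨g, hgmem, hgnot⟩ := SetLike.exists_of_lt hlt
    have hqg : ¬ q ∣ g := by
      rintro ⟨h, rfl⟩
      exact hgnot (Ideal.mul_mem_right h _ hqmem)
    have hT1fin : (T1 : Set (Fin 2 → K)).Finite := by
      apply (finite_common_zeros K hqprime hqg).subset
      intro v hv
      have hv2 : v ∈ (T2 : Set (Fin 2 → K)) := (le_of_lt h12) hv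
      exact ⟨hqmem v hv2, hgmem v hv⟩
    obtain ⟨x, hx⟩ := T0.isIrreducible'.nonempty
    obtain ⟨y, hy, hy'⟩ := SetLike.exists_of_lt h01
    have hxy : x ≠ y := fun h => hy' (h ▸ hx)
    have hx1 : x ∈ (T1 : Set (Fin 2 → K)) := (le_of_lt h01) hx
    have hsplit := (@isPreirreducible_iff_isClosed_union_isClosed _
        (zariskiTopology K (Fin 2 → K)) (T1 : Set (Fin 2 → K))).mp
      T1.isIrreducible'.isPreirreducible {y} ((T1 : Set (Fin 2 → K)) \ {y})
      (zc_singleton K y) (zc_finite K (hT1fin.subset Set.diff_subset))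
      (by
        intro v hv
        by_cases h : v = y
        · exact Or.inl (by simp [h])
        · exact Or.inr ⟨hv, by simp [h]⟩)
    rcases hsplit with h | h
    · exact hxy (h hx1)
    · exact (h hy).2 rfl
  apply le_antisymm
  · unfold topologicalKrullDim Order.krullDim
    apply iSup_le
    intro p
    have hlen : p.length ≤ 2 := by
      by_contra hlen
      push_neg at hlen
      have h01 : p ⟨0, by omega⟩ < p ⟨1, by omega⟩ := p.strictMono (by
        rw [Fin.mk_lt_mk]; omega)
      have h12 : p ⟨1, by omega⟩ < p ⟨2, by omega⟩ := p.strictMono (by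
        rw [Fin.mk_lt_mk]; omega)
      have h23 : p ⟨2, by omega⟩ < p ⟨3, by omega⟩ := p.strictMono (by
        rw [Fin.mk_lt_mk]; omega)
      exact absurd_chain _ _ _ _ h01 h12 h23
    exact_mod_cast hlen
  · have hzero : @IsIrreducible _ (zariskiTopology K (Fin 2 → K))
        ({fun _ => 0} : Set (Fin 2 → K)) := isIrreducible_singleton
    let I0 : TopologicalSpace.IrreducibleCloseds (Fin 2 → K) :=
      ⟨{fun _ => (0 : K)}, hzero, zc_singleton K _⟩
    let I1 : TopologicalSpace.IrreducibleCloseds (Fin 2 → K) :=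
      ⟨{v : Fin 2 → K | v 1 = 0}, line_irred K, zc_line K⟩
    let I2 : TopologicalSpace.IrreducibleCloseds (Fin 2 → K) :=
      ⟨Set.univ, univ_irred K, isClosed_univ⟩
    have l01 : I0 < I1 := by
      rw [SetLike.lt_iff_le_and_exists]
      constructor
      · intro v hv
        have hv' : v = fun _ => 0 := hv
        show v 1 = 0
        rw [hv']
      · refine ⟨![1, 0], ?_, ?_⟩
        · show (![1, 0] : Fin 2 → K) 1 = 0
          rfl
        · intro h
          have h' : (![1, 0] : Fin 2 → K) = fun _ => 0 := h
          have := congrFun h' 0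
          exact one_ne_zero this
    have l12 : I1 < I2 := by
      rw [SetLike.lt_iff_le_and_exists]
      constructor
      · intro v _
        exact Set.mem_univ v
      · refine ⟨![0, 1], Set.mem_univ _, ?_⟩
        intro h
        have h' : (![0, 1] : Fin 2 → K) 1 = 0 := h
        exact one_ne_zero h'
    let ch : LTSeries (TopologicalSpace.IrreducibleCloseds (Fin 2 → K)) :=
      { length := 2
        toFun := ![I0, I1, I2]
        step := by
          intro i
          fin_cases i
          · exact l01
          · exact l12 }
    have hch := Order.LTSeries.length_le_krullDim ch
    unfold topologicalKrullDim
    exact_mod_cast hch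

end A2

section A3

open Polynomial

variable (K : Type) [Field K]

lemma const_mem (V : Type) [AddCommGroup V] [Module K V] (r : K) :
    (fun _ : V => r) ∈ polyFunctions K V := by
  have h : (fun _ : V => r) = algebraMap K (V → K) r := by
    funext v
    simp [Pi.algebraMap_apply]
  rw [h]
  exact Subalgebra.algebraMap_mem _ r

lemma coordn_mem (n : ℕ) (i : Fin n) :
    (fun v : Fin n → K => v i) ∈ polyFunctions K (Fin n → K) :=
  Algebra.subset_adjoin ⟨LinearMap.proj i, rfl⟩

/-- The projection `𝔸³ → 𝔸²` as a linear map. -/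
noncomputable def projL : (Fin 3 → K) →ₗ[K] (Fin 2 → K) where
  toFun v := ![v 0, v 1]
  map_add' x y := by funext i; fin_cases i <;> simp
  map_smul' c x := by funext i; fin_cases i <;> simp

lemma comp_proj_mem {f : (Fin 2 → K) → K} (hf : f ∈ polyFunctions K (Fin 2 → K)) :
    (fun v : Fin 3 → K => f ![v 0, v 1]) ∈ polyFunctions K (Fin 3 → K) := by
  induction hf using Algebra.adjoin_induction with
  | mem g hg =>
    obtain ⟨φ, rfl⟩ := hg
    exact Algebra.subset_adjoin ⟨φ.comp (projL K), rfl⟩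
  | algebraMap r => exact Subalgebra.algebraMap_mem _ r
  | add f g _ _ ihf ihg => exact add_mem ihf ihg
  | mul f g _ _ ihf ihg => exact mul_mem ihf ihg

lemma cont_proj :
    Continuous[zariskiTopology K (Fin 3 → K), zariskiTopology K (Fin 2 → K)]
      (fun v : Fin 3 → K => ![v 0, v 1]) := by
  apply continuous_zar
  rintro s ⟨S, hS, rfl⟩
  refine ⟨(fun f => fun v : Fin 3 → K => f ![v 0, v 1]) '' S, ?_, ?_⟩
  · rintro _ ⟨f, hf, rfl⟩
    exact comp_proj_mem K (hS hf)
  · ext v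
    simp only [Set.mem_preimage, Set.mem_setOf_eq, Set.forall_mem_image]

lemma mem_poly3 (ω₀ : K) :
    (fun v : Fin 3 → K => v 0 ^ 2 * v 1 - ω₀ * (v 0 * v 1 ^ 2) + v 2 ^ 3) ∈
      polyFunctions K (Fin 3 → K) := by
  have h0 := coordn_mem K 3 0
  have h1 := coordn_mem K 3 1
  have h2 := coordn_mem K 3 2
  have hω := const_mem K (Fin 3 → K) ω₀
  have hh := add_mem (sub_mem (mul_mem (pow_mem h0 2) h1)
    (mul_mem hω (mul_mem h0 (pow_mem h1 2)))) (pow_mem h2 3)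
  have heq : (fun v : Fin 3 → K => v 0 ^ 2 * v 1 - ω₀ * (v 0 * v 1 ^ 2) + v 2 ^ 3) =
      ((fun v : Fin 3 → K => v 0) ^ 2 * (fun v : Fin 3 → K => v 1) -
        (fun _ : Fin 3 → K => ω₀) * ((fun v : Fin 3 → K => v 0) *
          (fun v : Fin 3 → K => v 1) ^ 2) + (fun v : Fin 3 → K => v 2) ^ 3) := by
    funext v
    simp only [Pi.add_apply, Pi.sub_apply, Pi.mul_apply, Pi.pow_apply]
  rw [heq]
  exact hh

lemma mem_poly2 (ω₀ A B C : K) :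
    (fun w : Fin 2 → K => A * w 0 ^ 3 + B * w 1 ^ 3 +
      C * (ω₀ * (w 0 * w 1 ^ 2) - w 0 ^ 2 * w 1)) ∈ polyFunctions K (Fin 2 → K) := by
  have h0 := coordn_mem K 2 0
  have h1 := coordn_mem K 2 1
  have hh := add_mem (add_mem (mul_mem (const_mem K (Fin 2 → K) A) (pow_mem h0 3))
      (mul_mem (const_mem K (Fin 2 → K) B) (pow_mem h1 3)))
    (mul_mem (const_mem K (Fin 2 → K) C)
      (sub_mem (mul_mem (const_mem K (Fin 2 → K) ω₀) (mul_mem h0 (pow_mem h1 2)))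
        (mul_mem (pow_mem h0 2) h1)))
  have heq : (fun w : Fin 2 → K => A * w 0 ^ 3 + B * w 1 ^ 3 +
      C * (ω₀ * (w 0 * w 1 ^ 2) - w 0 ^ 2 * w 1)) =
      ((fun _ : Fin 2 → K => A) * (fun w : Fin 2 → K => w 0) ^ 3 +
        (fun _ : Fin 2 → K => B) * (fun w : Fin 2 → K => w 1) ^ 3 +
        (fun _ : Fin 2 → K => C) * ((fun _ : Fin 2 → K => ω₀) *
          ((fun w : Fin 2 → K => w 0) * (fun w : Fin 2 → K => w 1) ^ 2) -
          (fun w : Fin 2 → K => w 0) ^ 2 * (fun w : Fin 2 → K => w 1))) := by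
    funext w
    simp only [Pi.add_apply, Pi.sub_apply, Pi.mul_apply, Pi.pow_apply]
  rw [heq]
  exact hh

end A3

/-- Over an algebraically closed field of characteristic `3`, for any
scalar `ω₀` the hypersurface `Y = {(α,β,γ) | α²β - ω₀αβ² + γ³ = 0} ⊆ 𝔸³` is an irreducible
conical closed subvariety of dimension `2`. -/
theorem statement12 (K : Type) [Field K] [IsAlgClosed K] [CharP K 3] (ω₀ : K) :
    IsZariskiClosed K (Fin 3 → K)
      {v : Fin 3 → K | v 0 ^ 2 * v 1 - ω₀ * (v 0 * v 1 ^ 2) + v 2 ^ 3 = 0} ∧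
    (∀ (c : K) (v : Fin 3 → K),
      v ∈ {v : Fin 3 → K | v 0 ^ 2 * v 1 - ω₀ * (v 0 * v 1 ^ 2) + v 2 ^ 3 = 0} →
      c • v ∈ {v : Fin 3 → K | v 0 ^ 2 * v 1 - ω₀ * (v 0 * v 1 ^ 2) + v 2 ^ 3 = 0}) ∧
    @IsIrreducible _ (zariskiTopology K (Fin 3 → K))
      {v : Fin 3 → K | v 0 ^ 2 * v 1 - ω₀ * (v 0 * v 1 ^ 2) + v 2 ^ 3 = 0} ∧
    @topologicalKrullDim
      ↥{v : Fin 3 → K | v 0 ^ 2 * v 1 - ω₀ * (v 0 * v 1 ^ 2) + v 2 ^ 3 = 0}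
      (TopologicalSpace.induced Subtype.val (zariskiTopology K (Fin 3 → K))) = 2 := by
  haveI hfact : Fact (Nat.Prime 3) := ⟨by norm_num⟩
  haveI hexp : ExpChar K 3 := ExpChar.prime (by norm_num)
  letI : TopologicalSpace (Fin 2 → K) := zariskiTopology K (Fin 2 → K)
  letI : TopologicalSpace (Fin 3 → K) := zariskiTopology K (Fin 3 → K)
  have hbij : Function.Bijective (fun x : K => x ^ 3) := by
    have h : (fun x : K => x ^ 3) = ⇑(frobeniusEquiv K 3) := by
      funext x
      rw [coe_frobeniusEquiv]
      rfl
    rw [h]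
    exact (frobeniusEquiv K 3).bijective
  set r : K → K := Function.surjInv hbij.2 with hrdef
  have hr3 : ∀ x : K, (r x) ^ 3 = x := fun x => Function.surjInv_eq hbij.2 x
  have hinj : ∀ x y : K, x ^ 3 = y ^ 3 → x = y := fun x y h => hbij.1 h
  set σ : (Fin 2 → K) → (Fin 3 → K) :=
    fun w => ![w 0, w 1, r (ω₀ * (w 0 * w 1 ^ 2) - w 0 ^ 2 * w 1)] with hσdef
  have hσ0 : ∀ w, σ w 0 = w 0 := fun w => rfl
  have hσ1 : ∀ w, σ w 1 = w 1 := by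
    intro w
    rw [hσdef]
    simp
  have hσ2 : ∀ w, σ w 2 = r (ω₀ * (w 0 * w 1 ^ 2) - w 0 ^ 2 * w 1) := by
    intro w
    rw [hσdef]
    simp [Matrix.cons_val_two, Matrix.tail_cons]
  have hσY : ∀ w, σ w ∈
      {v : Fin 3 → K | v 0 ^ 2 * v 1 - ω₀ * (v 0 * v 1 ^ 2) + v 2 ^ 3 = 0} := by
    intro w
    show σ w 0 ^ 2 * σ w 1 - ω₀ * (σ w 0 * σ w 1 ^ 2) + σ w 2 ^ 3 = 0
    rw [hσ0, hσ1, hσ2, hr3]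
    ring
  have hYrange : {v : Fin 3 → K | v 0 ^ 2 * v 1 - ω₀ * (v 0 * v 1 ^ 2) + v 2 ^ 3 = 0} =
      Set.range σ := by
    ext v
    constructor
    · intro hv
      have hv' : v 0 ^ 2 * v 1 - ω₀ * (v 0 * v 1 ^ 2) + v 2 ^ 3 = 0 := hv
      refine ⟨![v 0, v 1], ?_⟩
      have hw0 : (![v 0, v 1] : Fin 2 → K) 0 = v 0 := rfl
      have hw1 : (![v 0, v 1] : Fin 2 → K) 1 = v 1 := by simp
      funext i
      fin_cases i
      · show σ ![v 0, v 1] 0 = v 0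
        rw [hσ0, hw0]
      · show σ ![v 0, v 1] 1 = v 1
        rw [hσ1, hw1]
      · show σ ![v 0, v 1] 2 = v 2
        rw [hσ2, hw0, hw1]
        apply hinj
        rw [hr3]
        linear_combination -hv'
    · rintro ⟨w, rfl⟩
      exact hσY w
  have hadd3 : ∀ x y : K, (x + y) ^ 3 = x ^ 3 + y ^ 3 := by
    intro x y
    exact add_pow_char ..
  have hcube : ∀ f ∈ polyFunctions K (Fin 3 → K),
      (fun w => (f (σ w)) ^ 3) ∈ polyFunctions K (Fin 2 → K) := by
    intro f hf
    induction hf using Algebra.adjoin_induction with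
    | mem g hg =>
      obtain ⟨φ, rfl⟩ := hg
      have key : (fun w => (φ (σ w)) ^ 3) = (fun w : Fin 2 → K =>
          (φ (fun j => if (0 : Fin 3) = j then 1 else 0)) ^ 3 * w 0 ^ 3 +
          (φ (fun j => if (1 : Fin 3) = j then 1 else 0)) ^ 3 * w 1 ^ 3 +
          (φ (fun j => if (2 : Fin 3) = j then 1 else 0)) ^ 3 *
            (ω₀ * (w 0 * w 1 ^ 2) - w 0 ^ 2 * w 1)) := by
        funext w
        rw [LinearMap.pi_apply_eq_sum_univ φ (σ w), Fin.sum_univ_three]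
        rw [hσ0 w, hσ1 w, hσ2 w]
        rw [smul_eq_mul, smul_eq_mul, smul_eq_mul]
        rw [hadd3, hadd3, mul_pow, mul_pow, mul_pow, hr3]
        ring
      rw [key]
      exact mem_poly2 K ω₀ _ _ _
    | algebraMap c =>
      have key : (fun w => ((algebraMap K ((Fin 3 → K) → K) c) (σ w)) ^ 3) =
          (fun _ : Fin 2 → K => c ^ 3) := by
        funext w
        simp [Pi.algebraMap_apply]
      rw [key]
      exact const_mem K _ _
    | add f g _ _ ihf ihg =>
      have key : (fun w => ((f + g) (σ w)) ^ 3) =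
          ((fun w => (f (σ w)) ^ 3) + (fun w => (g (σ w)) ^ 3)) := by
        funext w
        simp only [Pi.add_apply]
        exact hadd3 _ _
      rw [key]
      exact add_mem ihf ihg
    | mul f g _ _ ihf ihg =>
      have key : (fun w => ((f * g) (σ w)) ^ 3) =
          ((fun w => (f (σ w)) ^ 3) * (fun w => (g (σ w)) ^ 3)) := by
        funext w
        simp only [Pi.mul_apply]
        exact mul_pow _ _ 3
      rw [key]
      exact mul_mem ihf ihg
  have hσcont : Continuous σ := by
    apply continuous_zar
    rintro s ⟨S, hS, rfl⟩
    refine ⟨(fun f => fun w => (f (σ w)) ^ 3) '' S, ?_, ?_⟩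
    · rintro _ ⟨f, hf, rfl⟩
      exact hcube f (hS hf)
    · ext w
      simp only [Set.mem_preimage, Set.mem_setOf_eq, Set.forall_mem_image]
      constructor
      · intro h f hf
        rw [h f hf]
        exact zero_pow (by norm_num)
      · intro h f hf
        exact (pow_eq_zero_iff (by norm_num)).mp (h hf)
  refine ⟨?_, ?_, ?_, ?_⟩
  · refine ⟨{fun v : Fin 3 → K => v 0 ^ 2 * v 1 - ω₀ * (v 0 * v 1 ^ 2) + v 2 ^ 3}, ?_, ?_⟩
    · intro f hf
      rw [Set.mem_singleton_iff] at hf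
      rw [hf]
      exact mem_poly3 K ω₀
    · ext v
      simp only [Set.mem_setOf_eq, Set.mem_singleton_iff, forall_eq]
  · intro c v hv
    have hv' : v 0 ^ 2 * v 1 - ω₀ * (v 0 * v 1 ^ 2) + v 2 ^ 3 = 0 := hv
    show (c • v) 0 ^ 2 * (c • v) 1 - ω₀ * ((c • v) 0 * (c • v) 1 ^ 2) + (c • v) 2 ^ 3 = 0
    simp only [Pi.smul_apply, smul_eq_mul]
    linear_combination c ^ 3 * hv'
  · have himg := (univ_irred K).image σ hσcont.continuousOn
    rw [Set.image_univ, ← hYrange] at himg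
    exact himg
  · let e : (Fin 2 → K) ≃ₜ
        ↥{v : Fin 3 → K | v 0 ^ 2 * v 1 - ω₀ * (v 0 * v 1 ^ 2) + v 2 ^ 3 = 0} :=
      { toFun := fun w => ⟨σ w, hσY w⟩
        invFun := fun y => ![y.1 0, y.1 1]
        left_inv := by
          intro w
          show (![σ w 0, σ w 1] : Fin 2 → K) = w
          funext i
          fin_cases i
          · show σ w 0 = w 0
            exact hσ0 w
          · show σ w 1 = w 1
            exact hσ1 w
        right_inv := by
          intro y
          apply Subtype.ext
          have hy : y.1 0 ^ 2 * y.1 1 - ω₀ * (y.1 0 * y.1 1 ^ 2) + y.1 2 ^ 3 = 0 := y.2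
          have hw0 : (![y.1 0, y.1 1] : Fin 2 → K) 0 = y.1 0 := rfl
          have hw1 : (![y.1 0, y.1 1] : Fin 2 → K) 1 = y.1 1 := by simp
          show σ ![y.1 0, y.1 1] = y.1
          funext i
          fin_cases i
          · show σ ![y.1 0, y.1 1] 0 = y.1 0
            rw [hσ0, hw0]
          · show σ ![y.1 0, y.1 1] 1 = y.1 1
            rw [hσ1, hw1]
          · show σ ![y.1 0, y.1 1] 2 = y.1 2
            rw [hσ2, hw0, hw1]
            apply hinj
            rw [hr3]
            linear_combination -hy
        continuous_toFun := hσcont.subtype_mk _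
        continuous_invFun := (cont_proj K).comp continuous_subtype_val }
    have hdim := IsHomeomorph.topologicalKrullDim_eq (⇑e) e.isHomeomorph
    show @topologicalKrullDim
      ↥{v : Fin 3 → K | v 0 ^ 2 * v 1 - ω₀ * (v 0 * v 1 ^ 2) + v 2 ^ 3 = 0}
      instTopologicalSpaceSubtype = 2
    rw [← hdim]
    exact dim_A2 K

end Paper
end
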